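/- arXiv:1912.13097 — 7 statements merged into one kernel-verified Lean document; each statement's English description precedes it below -/
import Mathlib

section
/- Let ψ : X → H be weakly measurable and suppose D(Ψ) = {f ∈ H : ∫_X |⟨f,ψ_x⟩|² dμ(x) < ∞} is dense in H. Then the frame operator S_ψ, weakly defined by ⟨S_ψ f, g⟩ = ∫_X ⟨f,ψ_x⟩⟨ψ_x,g⟩ dμ(x) on its natural domain, is closable, and its closure is dominated by the self-adjoint operator S_Ψ = C_ψ* C_ψ associated to the closed sesquilinear form Ψ(f,g) = ∫_X ⟨f,ψ_x⟩⟨ψ_x,g⟩ dμ(x). -/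
/-!
Mathlib's `⟪·,·⟫` is conjugate-linear in the first slot, so the paper's `⟨f, ψ_x⟩` is `⟪ψ x, f⟫`.

Let `C f = (x ↦ ⟪ψ x, f⟫)` be the analysis operator from `D(Ψ)` to `L²(μ)`, so that
`Ψ(f, g) = ⟪C g, C f⟫`. It is closed, since an `L²`-limit agrees a.e. with the pointwise limit
along a subsequence, and it is densely defined, so by von Neumann's theorem `S_Ψ = C† C` is
self-adjoint: projecting `(v, 0)` onto the closed graph of `C` shows that `1 + C† C` is onto, and a
symmetric operator `S` with `1 + S` onto equals its adjoint. The weak definition of `S_ψ f` says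
precisely that `C f ∈ dom C†` with `C† C f = S_ψ f`, so `S_ψ ⊆ S_Ψ`; being contained in a closed
operator, `S_ψ` is closable with closure inside `S_Ψ`.
-/

open MeasureTheory Filter Topology
open scoped ComplexInnerProductSpace InnerProductSpace ComplexConjugate

namespace LinearPMap

theorem IsClosed.closure_le {R E F : Type*} [CommRing R] [AddCommGroup E] [AddCommGroup F]
    [Module R E] [Module R F] [TopologicalSpace E] [TopologicalSpace F] [ContinuousAdd E]
    [ContinuousAdd F] [TopologicalSpace R] [ContinuousSMul R E] [ContinuousSMul R F]
    {f g : E →ₗ.[R] F} (hg : g.IsClosed) (h : f ≤ g) : f.closure ≤ g := by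
  refine le_of_le_graph ?_
  rw [← (hg.isClosable.leIsClosable h).graph_closure_eq_closure_graph]
  exact f.graph.topologicalClosure_minimal (le_graph_of_le h) hg

section CompMaximal

variable {R E F G : Type*} [Ring R] [AddCommGroup E] [Module R E] [AddCommGroup F] [Module R F]
  [AddCommGroup G] [Module R G] (g : F →ₗ.[R] G) (f : E →ₗ.[R] F)

def compMaximal : E →ₗ.[R] G where
  domain := (g.domain.comap f.toFun).map f.domain.subtype
  toFun := g.toFun ∘ₗ ((f.toFun ∘ₗ Submodule.inclusion (Submodule.map_subtype_le _ _)).codRestrict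
    g.domain fun x => by
      obtain ⟨y, hy, hxy⟩ := x.2
      have : Submodule.inclusion (Submodule.map_subtype_le _ _) x = y := Subtype.ext hxy.symm
      simpa only [LinearMap.comp_apply, this] using Submodule.mem_comap.1 hy)

theorem compMaximal_domain_le : (g.compMaximal f).domain ≤ f.domain :=
  Submodule.map_subtype_le _ _

variable {g f}

theorem mem_compMaximal_domain {x : E} :
    x ∈ (g.compMaximal f).domain ↔ ∃ hx : x ∈ f.domain, f ⟨x, hx⟩ ∈ g.domain := by
  constructor
  · rintro ⟨⟨x, hx⟩, hmem, rfl⟩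
    exact ⟨hx, hmem⟩
  · rintro ⟨hx, hmem⟩
    exact ⟨⟨x, hx⟩, hmem, rfl⟩

theorem compMaximal_apply_mk {x : E} (hx : x ∈ f.domain) (hfx : f ⟨x, hx⟩ ∈ g.domain) :
    g.compMaximal f ⟨x, mem_compMaximal_domain.2 ⟨hx, hfx⟩⟩ = g ⟨f ⟨x, hx⟩, hfx⟩ :=
  rfl

end CompMaximal

section AdjointCompSelf

variable {𝕜 E F : Type*} [RCLike 𝕜] [NormedAddCommGroup E] [InnerProductSpace 𝕜 E]
  [NormedAddCommGroup F] [InnerProductSpace 𝕜 F] [CompleteSpace E] {T : E →ₗ.[𝕜] F}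

theorem inner_adjoint_compMaximal_self_apply (hT : Dense (T.domain : Set E))
    (x : (T†.compMaximal T).domain) (y : T.domain) :
    ⟪T†.compMaximal T x, y⟫_𝕜 = ⟪T (Submodule.inclusion (compMaximal_domain_le _ _) x), T y⟫_𝕜 :=
  adjoint_isFormalAdjoint hT _ y

theorem isFormalAdjoint_adjoint_compMaximal_self (hT : Dense (T.domain : Set E)) :
    (T†.compMaximal T).IsFormalAdjoint (T†.compMaximal T) := by
  intro x y
  have hle := compMaximal_domain_le T† T
  calc ⟪T†.compMaximal T x, (y : E)⟫_𝕜
      = ⟪T (Submodule.inclusion hle x), T (Submodule.inclusion hle y)⟫_𝕜 :=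
        inner_adjoint_compMaximal_self_apply hT x (Submodule.inclusion hle y)
    _ = conj ⟪T (Submodule.inclusion hle y), T (Submodule.inclusion hle x)⟫_𝕜 :=
        (inner_conj_symm _ _).symm
    _ = conj ⟪T†.compMaximal T y, (x : E)⟫_𝕜 :=
        congrArg conj (inner_adjoint_compMaximal_self_apply hT y (Submodule.inclusion hle x)).symm
    _ = ⟪(x : E), T†.compMaximal T y⟫_𝕜 := inner_conj_symm _ _

theorem IsFormalAdjoint.adjoint_eq_self_of_surjective {S : E →ₗ.[𝕜] E}
    (hS : S.IsFormalAdjoint S) (hd : Dense (S.domain : Set E))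
    (hsurj : Function.Surjective fun a : S.domain => (a : E) + S a) : S† = S := by
  refine le_antisymm (le_of_le_graph fun ⟨p₁, p₂⟩ hp => ?_) (hS.le_adjoint hd)
  obtain ⟨y, rfl, rfl⟩ := S†.mem_graph_iff.1 hp
  obtain ⟨a, ha⟩ := hsurj (y + S† y)
  have horth : ∀ x : S.domain, ⟪(x : E) + S x, y - a⟫_𝕜 = 0 := by
    intro x
    rw [inner_sub_right, inner_add_left, inner_add_left, (adjoint_isFormalAdjoint hd).symm x y,
      hS x a, ← inner_add_right, ← inner_add_right, ← ha, sub_self]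
  have hya : (y : E) = a := by
    obtain ⟨x, hx⟩ := hsurj (y - a)
    simpa [hx, sub_eq_zero] using horth x
  exact S.mem_graph_iff.2 ⟨a, hya.symm, add_left_cancel (ha.trans (by rw [hya]))⟩

variable [CompleteSpace F]

theorem exists_inner_sub_eq_inner_apply (hT : T.IsClosed) (v : E) :
    ∃ a : T.domain, ∀ y : T.domain, ⟪v - a, y⟫_𝕜 = ⟪T a, T y⟫_𝕜 := by
  let W : Submodule 𝕜 (WithLp 2 (E × F)) :=
    T.graph.comap (WithLp.linearEquiv 2 𝕜 (E × F)).toLinearMap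
  have : CompleteSpace W :=
    (hT.preimage (WithLp.prod_continuous_ofLp 2 E F)).completeSpace_coe
  obtain ⟨p, hp, q, hq, hpq⟩ := W.exists_add_mem_mem_orthogonal (WithLp.toLp 2 (v, 0))
  obtain ⟨a, ha₁, ha₂⟩ := T.mem_graph_iff.mp hp
  refine ⟨a, fun y => ?_⟩
  have hy : WithLp.toLp 2 ((y : E), T y) ∈ W := T.mem_graph y
  have horth := (Submodule.mem_orthogonal W q).mp hq _ hy
  have hq : WithLp.ofLp q = (v - a, -T a) := by
    have ha₁ : (a : E) = p.ofLp.1 := ha₁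
    have ha₂ : T a = p.ofLp.2 := ha₂
    rw [eq_sub_of_add_eq' hpq.symm, WithLp.ofLp_sub, ha₁, ha₂]
    ext <;> simp
  rw [WithLp.prod_inner_apply, hq] at horth
  have h := congrArg conj horth
  simp only [_root_.map_add, _root_.map_zero, inner_conj_symm, inner_neg_left] at h
  linear_combination h

theorem exists_add_adjoint_compMaximal_self_eq (hd : Dense (T.domain : Set E)) (hT : T.IsClosed)
    (v : E) : ∃ a : (T†.compMaximal T).domain, (a : E) + T†.compMaximal T a = v := by
  obtain ⟨a, ha⟩ := exists_inner_sub_eq_inner_apply hT v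
  have hTa : T a ∈ T†.domain := mem_adjoint_domain_of_exists _ ⟨v - a, ha⟩
  refine ⟨⟨a, mem_compMaximal_domain.2 ⟨a.2, hTa⟩⟩, ?_⟩
  rw [compMaximal_apply_mk a.2 hTa, adjoint_apply_eq hd ⟨T a, hTa⟩ ha, add_sub_cancel]

theorem dense_adjoint_compMaximal_self_domain (hd : Dense (T.domain : Set E)) (hT : T.IsClosed) :
    Dense ((T†.compMaximal T).domain : Set E) := by
  rw [Submodule.dense_iff_topologicalClosure_eq_top, Submodule.topologicalClosure_eq_top_iff,
    Submodule.eq_bot_iff]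
  intro g hg
  obtain ⟨a, rfl⟩ := exists_add_adjoint_compMaximal_self_eq hd hT g
  set x := Submodule.inclusion (compMaximal_domain_le T† T) a
  have hSa : ⟪T†.compMaximal T a, (a : E)⟫_𝕜 = ⟪T x, T x⟫_𝕜 :=
    inner_adjoint_compMaximal_self_apply hd a x
  have h0 : ‖(a : E)‖ ^ 2 + ‖T x‖ ^ 2 = 0 := by
    have h := (inner_eq_zero_symm.1 (hg a a.2))
    rw [inner_add_left, hSa, inner_self_eq_norm_sq_to_K, inner_self_eq_norm_sq_to_K] at h
    exact_mod_cast h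
  have ha : a = 0 := by
    ext
    simpa using (add_eq_zero_iff_of_nonneg (sq_nonneg _) (sq_nonneg _)).1 h0 |>.1
  rw [ha, ZeroMemClass.coe_zero, LinearPMap.map_zero, add_zero]

theorem isSelfAdjoint_adjoint_compMaximal_self (hd : Dense (T.domain : Set E)) (hT : T.IsClosed) :
    IsSelfAdjoint (T†.compMaximal T) :=
  (isFormalAdjoint_adjoint_compMaximal_self hd).adjoint_eq_self_of_surjective
    (dense_adjoint_compMaximal_self_domain hd hT) fun v =>
      exists_add_adjoint_compMaximal_self_eq hd hT v

end AdjointCompSelf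

end LinearPMap

theorem MeasureTheory.Lp.ae_eq_of_tendsto_of_tendsto_apply {α E : Type*} [MeasurableSpace α]
    {μ : Measure α} [NormedAddCommGroup E] {p : ENNReal} [Fact (1 ≤ p)] {u : ℕ → Lp E p μ}
    {v : Lp E p μ} {F : ℕ → α → E} {G : α → E} (hu : Tendsto u atTop (𝓝 v))
    (huF : ∀ n, u n =ᵐ[μ] F n) (hFG : ∀ x, Tendsto (fun n => F n x) atTop (𝓝 (G x))) :
    v =ᵐ[μ] G := by
  obtain ⟨ns, hns, hae⟩ := (tendstoInMeasure_of_tendsto_Lp hu).exists_seq_tendsto_ae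
  filter_upwards [hae, ae_all_iff.2 huF] with x hx huFx
  refine tendsto_nhds_unique hx ?_
  exact ((hFG x).comp hns.tendsto_atTop).congr fun i => (huFx (ns i)).symm

open LinearPMap

section AnalysisOperator

variable {H X : Type*} [NormedAddCommGroup H] [InnerProductSpace ℂ H] [MeasurableSpace X]
  (μ : Measure X) (ψ : X → H)

def analysisDomain : Submodule ℂ H where
  carrier := {f | MemLp (fun x => ⟪ψ x, f⟫) 2 μ}
  add_mem' hf hg := (hf.add hg).ae_eq (ae_of_all _ fun _ => (inner_add_right _ _ _).symm)
  zero_mem' := MemLp.zero.ae_eq (ae_of_all _ fun _ => (inner_zero_right _).symm)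
  smul_mem' c _ hf := (hf.const_smul c).ae_eq (ae_of_all _ fun _ => (inner_smul_right _ _ _).symm)

theorem mem_analysisDomain {f : H} :
    f ∈ analysisDomain μ ψ ↔ MemLp (fun x => ⟪ψ x, f⟫) 2 μ :=
  Iff.rfl

noncomputable def analysisOperator : H →ₗ.[ℂ] Lp ℂ 2 μ where
  domain := analysisDomain μ ψ
  toFun :=
    { toFun := fun f => ((mem_analysisDomain μ ψ).1 f.2).toLp _
      map_add' := fun _ _ =>
        (MemLp.toLp_congr _ _ (ae_of_all _ fun _ => inner_add_right _ _ _)).trans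
          (MemLp.toLp_add _ _)
      map_smul' := fun c _ =>
        (MemLp.toLp_congr _ _ (ae_of_all _ fun _ => inner_smul_right _ _ _)).trans
          (MemLp.toLp_const_smul c _) }

theorem analysisOperator_ae_eq (f : (analysisOperator μ ψ).domain) :
    analysisOperator μ ψ f =ᵐ[μ] fun x => ⟪ψ x, (f : H)⟫ :=
  MemLp.coeFn_toLp ((mem_analysisDomain μ ψ).1 f.2)

theorem inner_analysisOperator (f g : (analysisOperator μ ψ).domain) :
    ⟪analysisOperator μ ψ g, analysisOperator μ ψ f⟫ =
      ∫ x, ⟪ψ x, (f : H)⟫ * ⟪(g : H), ψ x⟫ ∂μ := by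
  rw [L2.inner_def]
  refine integral_congr_ae ?_
  filter_upwards [analysisOperator_ae_eq μ ψ f, analysisOperator_ae_eq μ ψ g] with x hf hg
  rw [hf, hg, RCLike.inner_apply, inner_conj_symm, mul_comm]

theorem analysisOperator_isClosed : (analysisOperator μ ψ).IsClosed := by
  refine IsSeqClosed.isClosed fun seq ⟨f, u⟩ hseq hlim => ?_
  choose w hw₁ hw₂ using fun n => (analysisOperator μ ψ).mem_graph_iff.1 (hseq n)
  have hf : Tendsto (fun n => (w n : H)) atTop (𝓝 f) :=
    ((continuous_fst.tendsto _).comp hlim).congr fun n => (hw₁ n).symm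
  have hu : Tendsto (fun n => analysisOperator μ ψ (w n)) atTop (𝓝 u) :=
    ((continuous_snd.tendsto _).comp hlim).congr fun n => (hw₂ n).symm
  have hae : u =ᵐ[μ] fun x => ⟪ψ x, f⟫ :=
    Lp.ae_eq_of_tendsto_of_tendsto_apply hu (fun n => analysisOperator_ae_eq μ ψ (w n))
      fun x => tendsto_const_nhds.inner hf
  have hfD : f ∈ analysisDomain μ ψ := (Lp.memLp u).ae_eq hae
  exact (analysisOperator μ ψ).mem_graph_iff.2
    ⟨⟨f, hfD⟩, rfl, Lp.ext ((analysisOperator_ae_eq μ ψ _).trans hae.symm)⟩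

theorem mem_analysisDomain_of_integrable {f : H} (hmeas : Measurable fun x => ⟪f, ψ x⟫)
    (hint : Integrable (fun x => ⟪ψ x, f⟫ * ⟪f, ψ x⟫) μ) : f ∈ analysisDomain μ ψ := by
  have hmeas' : AEStronglyMeasurable (fun x => ⟪ψ x, f⟫) μ :=
    (RCLike.continuous_conj.measurable.comp hmeas).aestronglyMeasurable.congr
      (ae_of_all _ fun x => inner_conj_symm _ _)
  have hsq : ∀ x, RCLike.re (⟪ψ x, f⟫ * ⟪f, ψ x⟫) = ‖⟪ψ x, f⟫‖ ^ 2 := fun x => by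
    rw [← inner_conj_symm f, RCLike.mul_conj, ← RCLike.ofReal_pow, RCLike.ofReal_re]
  rw [mem_analysisDomain, memLp_two_iff_integrable_sq_norm hmeas']
  simpa only [hsq] using hint.re

variable [CompleteSpace H]

noncomputable def formOperator : H →ₗ.[ℂ] H :=
  (analysisOperator μ ψ)†.compMaximal (analysisOperator μ ψ)

theorem formOperator_domain_le : (formOperator μ ψ).domain ≤ analysisDomain μ ψ :=
  compMaximal_domain_le _ _

theorem isSelfAdjoint_formOperator (hdense : Dense (analysisDomain μ ψ : Set H)) :
    IsSelfAdjoint (formOperator μ ψ) :=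
  isSelfAdjoint_adjoint_compMaximal_self hdense (analysisOperator_isClosed μ ψ)

theorem inner_formOperator (hdense : Dense (analysisDomain μ ψ : Set H))
    (f : (formOperator μ ψ).domain) {g : H} (hg : g ∈ analysisDomain μ ψ) :
    ⟪g, formOperator μ ψ f⟫ = ∫ x, ⟪ψ x, (f : H)⟫ * ⟪g, ψ x⟫ ∂μ := by
  unfold formOperator
  rw [← inner_conj_symm, inner_adjoint_compMaximal_self_apply hdense f ⟨g, hg⟩, inner_conj_symm]
  exact inner_analysisOperator μ ψ _ ⟨g, hg⟩

theorem le_formOperator (hdense : Dense (analysisDomain μ ψ : Set H))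
    {S : H →ₗ.[ℂ] H} (hdom : S.domain ≤ analysisDomain μ ψ)
    (hval : ∀ f : S.domain, ∀ g ∈ analysisDomain μ ψ,
      ⟪g, S f⟫ = ∫ x, ⟪ψ x, (f : H)⟫ * ⟪g, ψ x⟫ ∂μ) :
    S ≤ formOperator μ ψ := by
  have hinner : ∀ (f : S.domain) (g : (analysisOperator μ ψ).domain),
      ⟪S f, (g : H)⟫ = ⟪analysisOperator μ ψ ⟨f, hdom f.2⟩, analysisOperator μ ψ g⟫ := by
    intro f g
    rw [← inner_conj_symm, hval f g g.2, ← inner_conj_symm (analysisOperator μ ψ _),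
      inner_analysisOperator]
  refine le_of_le_graph fun ⟨p₁, p₂⟩ hp => ?_
  obtain ⟨f, rfl, rfl⟩ := S.mem_graph_iff.1 hp
  have hCf : analysisOperator μ ψ ⟨f, hdom f.2⟩ ∈ (analysisOperator μ ψ)†.domain :=
    mem_adjoint_domain_of_exists _ ⟨S f, hinner f⟩
  exact (LinearPMap.mem_graph_iff _).2 ⟨⟨f, mem_compMaximal_domain.2 ⟨hdom f.2, hCf⟩⟩, rfl,
    (compMaximal_apply_mk _ hCf).trans (adjoint_apply_eq hdense _ (hinner f))⟩

end AnalysisOperator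

theorem frame_operator_closable_general
    {H : Type*} [NormedAddCommGroup H] [InnerProductSpace ℂ H] [CompleteSpace H]
    {X : Type*} [MeasurableSpace X] (μ : Measure X)
    (ψ : X → H)
    (hmeas : ∀ f : H, Measurable fun x => (⟪f, ψ x⟫ : ℂ))
    (hdense : Dense {f : H | MemLp (fun x => (⟪ψ x, f⟫ : ℂ)) 2 μ})
    (Sψ : H →ₗ.[ℂ] H)
    (hSdom : ∀ f : H, f ∈ Sψ.domain ↔
      ∃ h : H, ∀ g : H,
        Integrable (fun x => (⟪ψ x, f⟫ : ℂ) * (⟪g, ψ x⟫ : ℂ)) μ ∧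
        (⟪g, h⟫ : ℂ) = ∫ x, (⟪ψ x, f⟫ : ℂ) * (⟪g, ψ x⟫ : ℂ) ∂μ)
    (hSval : ∀ f : Sψ.domain, ∀ g : H,
      (⟪g, Sψ f⟫ : ℂ) = ∫ x, (⟪ψ x, (f : H)⟫ : ℂ) * (⟪g, ψ x⟫ : ℂ) ∂μ) :
    Sψ.IsClosable ∧
      ∃ SΨ : H →ₗ.[ℂ] H,
        SΨ.adjoint = SΨ ∧
        (∀ f : SΨ.domain, MemLp (fun x => (⟪ψ x, (f : H)⟫ : ℂ)) 2 μ) ∧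
        (∀ f : SΨ.domain, ∀ g : H, MemLp (fun x => (⟪ψ x, g⟫ : ℂ)) 2 μ →
          (⟪g, SΨ f⟫ : ℂ) = ∫ x, (⟪ψ x, (f : H)⟫ : ℂ) * (⟪g, ψ x⟫ : ℂ) ∂μ) ∧
        Sψ.closure ≤ SΨ := by
  have hdom : Sψ.domain ≤ analysisDomain μ ψ := by
    intro f hf
    obtain ⟨_, hint⟩ := (hSdom f).1 hf
    exact mem_analysisDomain_of_integrable μ ψ (hmeas f) (hint f).1
  have hle : Sψ ≤ formOperator μ ψ := le_formOperator μ ψ hdense hdom fun f g _ => hSval f g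
  have hSΨ := isSelfAdjoint_formOperator μ ψ hdense
  exact ⟨hSΨ.isClosed.isClosable.leIsClosable hle, formOperator μ ψ, hSΨ,
    fun f => formOperator_domain_le μ ψ f.2, fun f _ hg => inner_formOperator μ ψ hdense f hg,
    hSΨ.isClosed.closure_le hle⟩

/-- If `D(Ψ) = {f : ∫ ‖⟨f, ψ x⟩‖² dμ < ∞}` is dense, then the frame operator `S_ψ`
(weakly defined by `⟨S_ψ f, g⟩ = ∫ ⟨f, ψ x⟩⟨ψ x, g⟩ dμ` on its natural domain) is
closable, and its closure is dominated by (i.e. is a restriction of) a self-adjoint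
operator `S_Ψ` associated to the closed form `Ψ(f, g) = ∫ ⟨f, ψ x⟩⟨ψ x, g⟩ dμ`.
Paper inner products `⟨·,·⟩` (linear in the first entry) are rendered as
`⟪·,·⟫` with arguments swapped. -/
theorem frame_operator_closable
    {H : Type*} [NormedAddCommGroup H] [InnerProductSpace ℂ H] [CompleteSpace H]
    {X : Type*} [MeasurableSpace X] (μ : Measure X) [SigmaFinite μ]
    (ψ : X → H)
    (hmeas : ∀ f : H, Measurable fun x => (⟪f, ψ x⟫ : ℂ))
    (hdense : Dense {f : H | MemLp (fun x => (⟪ψ x, f⟫ : ℂ)) 2 μ})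
    (Sψ : H →ₗ.[ℂ] H)
    (hSdom : ∀ f : H, f ∈ Sψ.domain ↔
      ∃ h : H, ∀ g : H,
        Integrable (fun x => (⟪ψ x, f⟫ : ℂ) * (⟪g, ψ x⟫ : ℂ)) μ ∧
        (⟪g, h⟫ : ℂ) = ∫ x, (⟪ψ x, f⟫ : ℂ) * (⟪g, ψ x⟫ : ℂ) ∂μ)
    (hSval : ∀ f : Sψ.domain, ∀ g : H,
      (⟪g, Sψ f⟫ : ℂ) = ∫ x, (⟪ψ x, (f : H)⟫ : ℂ) * (⟪g, ψ x⟫ : ℂ) ∂μ) :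
    Sψ.IsClosable ∧
      ∃ SΨ : H →ₗ.[ℂ] H,
        SΨ.adjoint = SΨ ∧
        (∀ f : SΨ.domain, MemLp (fun x => (⟪ψ x, (f : H)⟫ : ℂ)) 2 μ) ∧
        (∀ f : SΨ.domain, ∀ g : H, MemLp (fun x => (⟪ψ x, g⟫ : ℂ)) 2 μ →
          (⟪g, SΨ f⟫ : ℂ) = ∫ x, (⟪ψ x, (f : H)⟫ : ℂ) * (⟪g, ψ x⟫ : ℂ) ∂μ) ∧
        Sψ.closure ≤ SΨ :=
  frame_operator_closable_general μ ψ hmeas hdense Sψ hSdom hSval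
end

section
/- Let H₁, H₂, H be Hilbert spaces, T₁ : D(T₁) ⊆ H₁ → H densely defined and closed, T₂ : D(T₂) ⊆ H → H₂ densely defined, with D(T₁*) = D(T₂). If ‖T₁* f‖ ≤ λ‖T₂ f‖ for all f ∈ D(T₁*) and some λ > 0, then there exists a bounded operator U ∈ B(H₁, H₂) such that T₁ = T₂* U. -/
/-!
Because `‖T₁* f‖ ≤ λ ‖T₂ f‖`, the vector `T₂ f` determines `T₁* f`, boundedly: `T₂ f ↦ T₁* f`
extends by continuity to the closure of the range of `T₂` and by zero to its orthogonal
complement, giving a bounded `V : H₂ → H₁` with `T₁* = V T₂`. Taking adjoints, and using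
`T₁ = T₁**` for the closed operator `T₁` (its adjoint is densely defined as `D(T₁*) = D(T₂)`),
yields `T₁ = (V T₂)* = T₂* V*`, so `U = V*` works.
-/

open MeasureTheory Filter Topology
open scoped ComplexInnerProductSpace

/-- Composition `T ∘ M` of a partially defined operator `T` with an everywhere defined
bounded operator `M`, with domain `{f : M f ∈ D(T)}`. -/
noncomputable def LinearPMap.compCLM {E F G : Type*}
    [NormedAddCommGroup E] [NormedAddCommGroup F] [NormedAddCommGroup G]
    [NormedSpace ℂ E] [NormedSpace ℂ F] [NormedSpace ℂ G]
    (T : F →ₗ.[ℂ] G) (M : E →L[ℂ] F) : E →ₗ.[ℂ] G where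
  domain := T.domain.comap (M : E →ₗ[ℂ] F)
  toFun := T.toFun.comp ((M : E →ₗ[ℂ] F).restrict fun _ hx => hx)

section DoubleAdjoint

variable {𝕜 E F : Type*} [RCLike 𝕜]
  [NormedAddCommGroup E] [InnerProductSpace 𝕜 E] [CompleteSpace E]
  [NormedAddCommGroup F] [InnerProductSpace 𝕜 F] [CompleteSpace F]

open WithLp in
theorem Submodule.adjoint_adjoint_of_isClosed {g : Submodule 𝕜 (E × F)}
    (hg : IsClosed (g : Set (E × F))) : g.adjoint.adjoint = g := by
  let Γ : Submodule 𝕜 (WithLp 2 (E × F)) :=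
    g.comap (WithLp.linearEquiv 2 𝕜 (E × F)).toLinearMap
  have hΓ : IsClosed (Γ : Set (WithLp 2 (E × F))) :=
    hg.preimage (WithLp.prod_continuous_ofLp _ _ _)
  refine le_antisymm (fun x hx => ?_) (fun x hx => ?_)
  · suffices toLp 2 x ∈ Γᗮᗮ by
      rwa [Submodule.orthogonal_orthogonal_eq_closure, hΓ.submodule_topologicalClosure_eq] at this
    intro z hz
    -- `g.adjoint` is `Γᗮ` rotated by `(a, b) ↦ (b, -a)`.
    have hz_adjoint : ((ofLp z).snd, -(ofLp z).fst) ∈ g.adjoint := by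
      rw [mem_adjoint_iff]
      intro a b hab
      rw [inner_neg_right, sub_neg_eq_add, add_comm]
      simpa only [prod_inner_apply] using hz (toLp 2 (a, b)) hab
    have := (mem_adjoint_iff _ _).1 hx _ _ hz_adjoint
    rw [inner_neg_left] at this
    rw [prod_inner_apply]
    linear_combination -this
  · rw [mem_adjoint_iff]
    intro a b hab
    have := congrArg (starRingEnd 𝕜) ((mem_adjoint_iff _ _).1 hab x.1 x.2 hx)
    simp only [map_sub, inner_conj_symm, map_zero] at this
    linear_combination -this

theorem LinearPMap.adjoint_adjoint_of_isClosed {T : E →ₗ.[𝕜] F}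
    (hT : Dense (T.domain : Set E)) (hT' : Dense (T.adjoint.domain : Set F)) (hc : T.IsClosed) :
    T.adjoint.adjoint = T :=
  eq_of_eq_graph <| by
    rw [adjoint_graph_eq_graph_adjoint hT', adjoint_graph_eq_graph_adjoint hT,
      Submodule.adjoint_adjoint_of_isClosed hc]

end DoubleAdjoint

section Factorization

variable {𝕜 D H₁ H₂ : Type*} [RCLike 𝕜] [AddCommGroup D] [Module 𝕜 D]
  [NormedAddCommGroup H₁] [NormedSpace 𝕜 H₁] [CompleteSpace H₁]
  [NormedAddCommGroup H₂] [InnerProductSpace 𝕜 H₂] [CompleteSpace H₂]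

theorem LinearMap.exists_clm_comp_eq_of_norm_le (A : D →ₗ[𝕜] H₁) (G : D →ₗ[𝕜] H₂) (C : ℝ)
    (h : ∀ f, ‖A f‖ ≤ C * ‖G f‖) :
    ∃ V : H₂ →L[𝕜] H₁, ∀ f, V (G f) = A f := by
  set K := (range G).topologicalClosure
  let G' : D →ₗ[𝕜] K := (Submodule.inclusion (range G).le_topologicalClosure).comp G.rangeRestrict
  have hG' : DenseRange G' :=
    ((denseRange_inclusion_iff subset_closure).2 subset_rfl).comp
      G.surjective_rangeRestrict.denseRange (continuous_inclusion (range G).le_topologicalClosure)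
  refine ⟨(A.extendOfNorm G').comp K.orthogonalProjectionOnto, fun f => ?_⟩
  have hGf : G f ∈ K := (range G).le_topologicalClosure (mem_range_self G f)
  rw [ContinuousLinearMap.comp_apply, K.orthogonalProjectionOnto_mem_subspace_eq_self ⟨G f, hGf⟩]
  exact extendOfNorm_eq (f := A) hG' ⟨C, h⟩ f

theorem LinearPMap.exists_clm_eq_compPMap_of_norm_le
    (S : D →ₗ.[𝕜] H₁) (T : D →ₗ.[𝕜] H₂) (hdom : S.domain = T.domain) (C : ℝ)
    (h : ∀ (x : D) (hS : x ∈ S.domain) (hT : x ∈ T.domain), ‖S ⟨x, hS⟩‖ ≤ C * ‖T ⟨x, hT⟩‖) :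
    ∃ V : H₂ →L[𝕜] H₁, S = (V : H₂ →ₗ[𝕜] H₁).compPMap T := by
  obtain ⟨V, hV⟩ := LinearMap.exists_clm_comp_eq_of_norm_le
    (S.toFun.comp (LinearEquiv.ofEq _ _ hdom.symm).toLinearMap) T.toFun C
    fun x => h x (hdom.ge x.2) x.2
  exact ⟨V, ext hdom fun x _ hT => (hV ⟨x, hT⟩).symm⟩

end Factorization

theorem LinearPMap.adjoint_compPMap {E F G : Type*}
    [NormedAddCommGroup E] [InnerProductSpace ℂ E] [CompleteSpace E]
    [NormedAddCommGroup F] [InnerProductSpace ℂ F] [CompleteSpace F]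
    [NormedAddCommGroup G] [InnerProductSpace ℂ G] [CompleteSpace G]
    {T : E →ₗ.[ℂ] F} (hT : Dense (T.domain : Set E)) (V : F →L[ℂ] G) :
    ((V : F →ₗ[ℂ] G).compPMap T).adjoint = T.adjoint.compCLM V.adjoint := by
  have hinner : ∀ (y : G) (x : T.domain), ⟪y, V (T x)⟫ = ⟪V.adjoint y, T x⟫ := fun y x =>
    (V.adjoint_inner_left _ _).symm
  have hdom : ((V : F →ₗ[ℂ] G).compPMap T).adjoint.domain =
      (T.adjoint.compCLM V.adjoint).domain := by
    ext y
    change _ ↔ V.adjoint y ∈ T.adjoint.domain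
    have hfun : (innerₛₗ ℂ y).comp ((V : F →ₗ[ℂ] G).compPMap T).toFun =
        (innerₛₗ ℂ (V.adjoint y)).comp T.toFun := LinearMap.ext (hinner y)
    rw [mem_adjoint_domain_iff, mem_adjoint_domain_iff, hfun]
    exact Iff.rfl
  refine ext hdom fun y hy hy' =>
    adjoint_apply_eq (T := (V : F →ₗ[ℂ] G).compPMap T) hT ⟨y, hy⟩ fun x => ?_
  exact (adjoint_isFormalAdjoint hT ⟨_, hy'⟩ x).trans (hinner y x).symm

theorem douglas_unbounded_general
    {H H₁ H₂ : Type*}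
    [NormedAddCommGroup H] [InnerProductSpace ℂ H] [CompleteSpace H]
    [NormedAddCommGroup H₁] [InnerProductSpace ℂ H₁] [CompleteSpace H₁]
    [NormedAddCommGroup H₂] [InnerProductSpace ℂ H₂] [CompleteSpace H₂]
    (T₁ : H₁ →ₗ.[ℂ] H) (T₂ : H →ₗ.[ℂ] H₂)
    (hT₁dense : Dense (T₁.domain : Set H₁)) (hT₁closed : T₁.IsClosed)
    (hT₂dense : Dense (T₂.domain : Set H))
    (hdom : T₁.adjoint.domain = T₂.domain)
    (lam : ℝ)
    (hbound : ∀ (f : H) (hf₁ : f ∈ T₁.adjoint.domain) (hf₂ : f ∈ T₂.domain),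
      ‖T₁.adjoint ⟨f, hf₁⟩‖ ≤ lam * ‖T₂ ⟨f, hf₂⟩‖) :
    ∃ U : H₁ →L[ℂ] H₂, T₁ = T₂.adjoint.compCLM U := by
  obtain ⟨V, hV⟩ := T₁.adjoint.exists_clm_eq_compPMap_of_norm_le T₂ hdom lam hbound
  refine ⟨V.adjoint, ?_⟩
  rw [← T₁.adjoint_adjoint_of_isClosed hT₁dense (hdom ▸ hT₂dense) hT₁closed, hV,
    LinearPMap.adjoint_compPMap hT₂dense]

/-- Unbounded Douglas majorization: if `T₁ : D(T₁) ⊆ H₁ → H` is densely defined and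
closed, `T₂ : D(T₂) ⊆ H → H₂` is densely defined, `D(T₁*) = D(T₂)`, and
`‖T₁* f‖ ≤ λ ‖T₂ f‖` for all `f ∈ D(T₁*)` and some `λ > 0`, then there is a bounded
`U ∈ B(H₁, H₂)` with `T₁ = T₂* U` (including equality of domains). -/
theorem douglas_unbounded
    {H H₁ H₂ : Type*}
    [NormedAddCommGroup H] [InnerProductSpace ℂ H] [CompleteSpace H]
    [NormedAddCommGroup H₁] [InnerProductSpace ℂ H₁] [CompleteSpace H₁]
    [NormedAddCommGroup H₂] [InnerProductSpace ℂ H₂] [CompleteSpace H₂]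
    (T₁ : H₁ →ₗ.[ℂ] H) (T₂ : H →ₗ.[ℂ] H₂)
    (hT₁dense : Dense (T₁.domain : Set H₁)) (hT₁closed : T₁.IsClosed)
    (hT₂dense : Dense (T₂.domain : Set H))
    (hdom : T₁.adjoint.domain = T₂.domain)
    (lam : ℝ) (hlam : 0 < lam)
    (hbound : ∀ (f : H) (hf₁ : f ∈ T₁.adjoint.domain) (hf₂ : f ∈ T₂.domain),
      ‖T₁.adjoint ⟨f, hf₁⟩‖ ≤ lam * ‖T₂ ⟨f, hf₂⟩‖) :
    ∃ U : H₁ →L[ℂ] H₂, T₁ = T₂.adjoint.compCLM U :=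
  douglas_unbounded_general T₁ T₂ hT₁dense hT₁closed hT₂dense hdom lam hbound
end

section
/- Let (X,μ) be a σ-finite measure space with a countable covering by disjoint measurable sets of finite positive measure, H a separable Hilbert space, and A a densely defined operator on H. Then there exists a continuous weak atomic system for A; concretely, taking an orthonormal basis {e_n} ⊂ D(A) and setting ψ_x = Ae_n/√(μ(X_n)) for x ∈ X_n, the function ψ satisfies: ∫_X |⟨f,ψ_x⟩|² dμ(x) = ‖A*f‖² < ∞ for all f ∈ D(A*), and for all f ∈ D(A) there is a_f ∈ L²(X,μ) with ‖a_f‖₂ = ‖f‖ and ⟨Af,u⟩ = ∫_X a_f(x)⟨ψ_x,u⟩ dμ(x) for all u ∈ D(A*). -/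
open Function MeasureTheory
open scoped ComplexInnerProductSpace ENNReal

/-! On `Xₙ` the function `x ↦ ⟪f, ψ x⟫` is the constant `⟪A† f, eₙ⟫ / √μ(Xₙ)`, so its squared
`L²` norm is `∑ₙ ‖⟪A† f, eₙ⟫‖² = ‖A† f‖²` by Parseval. For `f ∈ D(A)` take `a = ⟪eₙ, f⟫ / √μ(Xₙ)`
on `Xₙ`; again `‖a‖₂ = ‖f‖`, and
`∫ a ⟪u, ψ⟫ dμ = ∑ₙ ⟪eₙ, f⟫ ⟪A† u, eₙ⟫ = ⟪A† u, f⟫ = ⟪u, A f⟫`. -/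

theorem HilbertBasis.hasSum_norm_inner_sq {ι 𝕜 E : Type*} [RCLike 𝕜] [NormedAddCommGroup E]
    [InnerProductSpace 𝕜 E] (b : HilbertBasis ι 𝕜 E) (x : E) :
    HasSum (fun i => ‖inner 𝕜 (b i) x‖ ^ 2) (‖x‖ ^ 2) := by
  simpa [b.repr_apply_apply] using lp.hasSum_norm (p := 2) (by norm_num) (b.repr x)

theorem Set.exists_eqOn_of_pairwise_disjoint_of_iUnion_eq_univ {X ι α : Type*} {s : ι → Set X}
    (hdisj : Pairwise (Disjoint on s)) (hcover : ⋃ i, s i = Set.univ) (c : ι → α) :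
    ∃ F : X → α, ∀ i, Set.EqOn F (fun _ => c i) (s i) := by
  choose idx hidx using fun x => Set.mem_iUnion.mp (hcover ▸ Set.mem_univ x)
  refine ⟨c ∘ idx, fun i x hx => congrArg c ?_⟩
  by_contra hne
  exact Set.disjoint_left.mp (hdisj hne) (hidx x) hx

theorem Real.mul_inv_sqrt_sq {t : ℝ} (ht : 0 < t) : t * (√t)⁻¹ ^ 2 = 1 := by
  rw [inv_pow, Real.sq_sqrt ht.le, mul_inv_cancel₀ ht.ne']

namespace MeasureTheory

theorem memLp_two_and_integral_norm_sq_of_lintegral {X E : Type*} [MeasurableSpace X]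
    {μ : Measure X} [NormedAddCommGroup E] {F : X → E} (hF : AEStronglyMeasurable F μ) {B : ℝ}
    (hB : 0 ≤ B) (h : ∫⁻ x, ‖F x‖ₑ ^ 2 ∂μ = ENNReal.ofReal B) :
    MemLp F 2 μ ∧ ∫ x, ‖F x‖ ^ 2 ∂μ = B := by
  have hsq : AEStronglyMeasurable (fun x => ‖F x‖ ^ 2) μ := hF.norm.pow 2
  have hlint : ∫⁻ x, ENNReal.ofReal (‖F x‖ ^ 2) ∂μ = ENNReal.ofReal B := by
    simpa only [ENNReal.ofReal_pow (norm_nonneg _), ofReal_norm] using h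
  have hnonneg : 0 ≤ᵐ[μ] fun x => ‖F x‖ ^ 2 := ae_of_all _ fun x => sq_nonneg _
  refine ⟨(memLp_two_iff_integrable_sq_norm hF).mpr ⟨hsq, ?_⟩, ?_⟩
  · rw [hasFiniteIntegral_iff_ofReal hnonneg, hlint]
    exact ENNReal.ofReal_lt_top
  · rw [integral_eq_lintegral_of_nonneg_ae hnonneg hsq, hlint, ENNReal.toReal_ofReal hB]

section PiecewiseConstant

variable {X ι : Type*} [MeasurableSpace X] [Countable ι] {μ : Measure X} {s : ι → Set X}

theorem aestronglyMeasurable_of_eqOn_const {E : Type*} [TopologicalSpace E]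
    [TopologicalSpace.PseudoMetrizableSpace E] (hmeas : ∀ i, MeasurableSet (s i))
    (hcover : ⋃ i, s i = Set.univ) {F : X → E} {c : ι → E}
    (hF : ∀ i, Set.EqOn F (fun _ => c i) (s i)) : AEStronglyMeasurable F μ := by
  rw [← Measure.restrict_univ (μ := μ), ← hcover, aestronglyMeasurable_iUnion_iff]
  exact fun i => aestronglyMeasurable_const.congr
    ((ae_restrict_mem (hmeas i)).mono fun x hx => (hF i hx).symm)

theorem lintegral_eq_tsum_of_eqOn_const (hmeas : ∀ i, MeasurableSet (s i))
    (hdisj : Pairwise (Disjoint on s)) (hcover : ⋃ i, s i = Set.univ) {g : X → ℝ≥0∞}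
    {c : ι → ℝ≥0∞} (hg : ∀ i, Set.EqOn g (fun _ => c i) (s i)) :
    ∫⁻ x, g x ∂μ = ∑' i, μ (s i) * c i := by
  rw [← setLIntegral_univ, ← hcover, lintegral_iUnion hmeas hdisj]
  refine tsum_congr fun i => ?_
  rw [setLIntegral_congr_fun (hmeas i) (hg i), setLIntegral_const, mul_comm]

theorem integral_eq_tsum_of_eqOn_const {E : Type*} [NormedAddCommGroup E] [NormedSpace ℝ E]
    [CompleteSpace E] (hmeas : ∀ i, MeasurableSet (s i)) (hdisj : Pairwise (Disjoint on s))
    (hcover : ⋃ i, s i = Set.univ) {F : X → E} {c : ι → E}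
    (hF : ∀ i, Set.EqOn F (fun _ => c i) (s i)) (hint : Integrable F μ) :
    ∫ x, F x ∂μ = ∑' i, μ.real (s i) • c i := by
  rw [← setIntegral_univ, ← hcover,
    integral_iUnion hmeas hdisj (by rwa [hcover, integrableOn_univ])]
  exact tsum_congr fun i => by rw [setIntegral_congr_fun (hmeas i) (hF i), setIntegral_const]

theorem measureReal_mul_inv_sqrt_sq {t : Set X} (hpos : 0 < μ t) (hfin : μ t < ⊤) :
    μ.real t * (√(μ.real t))⁻¹ ^ 2 = 1 :=
  Real.mul_inv_sqrt_sq (ENNReal.toReal_pos hpos.ne' hfin.ne)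

theorem memLp_two_and_integral_norm_sq_of_eqOn_smul_const {E : Type*} [NormedAddCommGroup E]
    [NormedSpace ℝ E] (hmeas : ∀ i, MeasurableSet (s i)) (hdisj : Pairwise (Disjoint on s))
    (hcover : ⋃ i, s i = Set.univ) (hpos : ∀ i, 0 < μ (s i)) (hfin : ∀ i, μ (s i) < ⊤)
    {F : X → E} {c : ι → E} (hF : ∀ i, Set.EqOn F (fun _ => (√(μ.real (s i)))⁻¹ • c i) (s i))
    {B : ℝ} (hc : HasSum (fun i => ‖c i‖ ^ 2) B) :
    MemLp F 2 μ ∧ ∫ x, ‖F x‖ ^ 2 ∂μ = B := by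
  have hterm : ∀ i, μ (s i) * ‖(√(μ.real (s i)))⁻¹ • c i‖ₑ ^ 2 = ENNReal.ofReal (‖c i‖ ^ 2) := by
    intro i
    rw [← ofReal_measureReal (hfin i).ne, ← ofReal_norm, ← ENNReal.ofReal_pow (norm_nonneg _),
      ← ENNReal.ofReal_mul measureReal_nonneg, norm_smul, Real.norm_of_nonneg (by positivity),
      mul_pow, ← mul_assoc, measureReal_mul_inv_sqrt_sq (hpos i) (hfin i), one_mul]
  refine memLp_two_and_integral_norm_sq_of_lintegral
    (aestronglyMeasurable_of_eqOn_const hmeas hcover hF) (hc.nonneg fun _ => sq_nonneg _) ?_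
  rw [lintegral_eq_tsum_of_eqOn_const hmeas hdisj hcover fun i x hx => by rw [hF i hx],
    tsum_congr hterm, ← ENNReal.ofReal_tsum_of_nonneg (fun _ => sq_nonneg _) hc.summable,
    hc.tsum_eq]

theorem integral_mul_eq_tsum_of_eqOn_smul_const {𝕜 : Type*} [RCLike 𝕜]
    (hmeas : ∀ i, MeasurableSet (s i)) (hdisj : Pairwise (Disjoint on s))
    (hcover : ⋃ i, s i = Set.univ) (hpos : ∀ i, 0 < μ (s i)) (hfin : ∀ i, μ (s i) < ⊤)
    {F G : X → 𝕜} {c d : ι → 𝕜}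
    (hF : ∀ i, Set.EqOn F (fun _ => (√(μ.real (s i)))⁻¹ • c i) (s i))
    (hG : ∀ i, Set.EqOn G (fun _ => (√(μ.real (s i)))⁻¹ • d i) (s i))
    (hint : Integrable (F * G) μ) :
    ∫ x, F x * G x ∂μ = ∑' i, c i * d i := by
  rw [integral_eq_tsum_of_eqOn_const (F := fun x => F x * G x)
    (c := fun i => ((√(μ.real (s i)))⁻¹ • c i) * ((√(μ.real (s i)))⁻¹ • d i)) hmeas hdisj hcover
    (fun i x hx => by simp only [hF i hx, hG i hx]) hint]
  refine tsum_congr fun i => ?_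
  rw [smul_mul_smul_comm, smul_smul, ← sq, measureReal_mul_inv_sqrt_sq (hpos i) (hfin i), one_smul]

end PiecewiseConstant

end MeasureTheory

/-- Existence of a continuous weak atomic system for a densely defined operator `A` on a
separable Hilbert space: if `{Xₙ}` is a countable covering of `X` by disjoint measurable
sets of finite positive measure, `{eₙ} ⊂ D(A)` is an orthonormal basis of `H`, and
`ψ_x = A eₙ / √(μ Xₙ)` for `x ∈ Xₙ`, then `∫ ‖⟨f, ψ_x⟩‖² dμ = ‖A* f‖² < ∞` for every
`f ∈ D(A*)`, and every `f ∈ D(A)` admits `a_f ∈ L²(X, μ)` with `‖a_f‖₂ = ‖f‖` and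
`⟨A f, u⟩ = ∫ a_f x ⟨ψ_x, u⟩ dμ` for all `u ∈ D(A*)`. -/
theorem exists_continuous_weak_atomic_system
    {H : Type*} [NormedAddCommGroup H] [InnerProductSpace ℂ H] [CompleteSpace H]
    {X : Type*} [MeasurableSpace X] (μ : Measure X)
    (A : H →ₗ.[ℂ] H) (hA : Dense (A.domain : Set H))
    (Xn : ℕ → Set X) (hXnmeas : ∀ n, MeasurableSet (Xn n))
    (hXndisj : Pairwise (Function.onFun Disjoint Xn))
    (hXncover : (⋃ n, Xn n) = Set.univ)
    (hXnpos : ∀ n, 0 < μ (Xn n)) (hXnfin : ∀ n, μ (Xn n) < ⊤)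
    (e : ℕ → H) (hON : Orthonormal ℂ e)
    (htotal : Dense ((Submodule.span ℂ (Set.range e) : Submodule ℂ H) : Set H))
    (he : ∀ n, e n ∈ A.domain)
    (ψ : X → H)
    (hψ : ∀ n, ∀ x ∈ Xn n,
      ψ x = (Real.sqrt ((μ (Xn n)).toReal))⁻¹ • A ⟨e n, he n⟩) :
    (∀ f : H, ∀ hf : f ∈ A.adjoint.domain,
      MemLp (fun x => (⟪f, ψ x⟫ : ℂ)) 2 μ ∧
      ∫ x, ‖(⟪f, ψ x⟫ : ℂ)‖ ^ 2 ∂μ = ‖A.adjoint ⟨f, hf⟩‖ ^ 2) ∧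
    (∀ f : H, ∀ hf : f ∈ A.domain, ∃ a : X → ℂ,
      MemLp a 2 μ ∧
      ∫ x, ‖a x‖ ^ 2 ∂μ = ‖f‖ ^ 2 ∧
      ∀ u : H, u ∈ A.adjoint.domain →
        (⟪u, A ⟨f, hf⟩⟫ : ℂ) = ∫ x, a x * (⟪u, ψ x⟫ : ℂ) ∂μ) := by
  obtain ⟨b, hb⟩ : ∃ b : HilbertBasis ℕ ℂ H, ⇑b = e :=
    ⟨_, HilbertBasis.coe_mk hON (Submodule.dense_iff_topologicalClosure_eq_top.mp htotal).ge⟩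
  have hadj := A.adjoint_isFormalAdjoint hA
  have hψ_inner : ∀ u (hu : u ∈ A.adjoint.domain) n, Set.EqOn (fun x => ⟪u, ψ x⟫)
      (fun _ => (√(μ.real (Xn n)))⁻¹ • ⟪A.adjoint ⟨u, hu⟩, e n⟫) (Xn n) := by
    intro u hu n x hx
    beta_reduce
    rw [hψ n x hx, RCLike.real_smul_eq_coe_smul (K := ℂ), inner_smul_real_right]
    exact congrArg _ (hadj ⟨u, hu⟩ ⟨e n, he n⟩).symm
  have hparseval : ∀ g, HasSum (fun n => ‖⟪e n, g⟫‖ ^ 2) (‖g‖ ^ 2) := fun g => by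
    simpa only [hb] using b.hasSum_norm_inner_sq g
  have hψ_memLp : ∀ f (hf : f ∈ A.adjoint.domain), MemLp (fun x => ⟪f, ψ x⟫) 2 μ ∧
      ∫ x, ‖⟪f, ψ x⟫‖ ^ 2 ∂μ = ‖A.adjoint ⟨f, hf⟩‖ ^ 2 := fun f hf =>
    memLp_two_and_integral_norm_sq_of_eqOn_smul_const hXnmeas hXndisj hXncover hXnpos hXnfin
      (hψ_inner f hf) (by simpa only [norm_inner_symm] using hparseval (A.adjoint ⟨f, hf⟩))
  refine ⟨hψ_memLp, fun f hf => ?_⟩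
  obtain ⟨a, ha⟩ := Set.exists_eqOn_of_pairwise_disjoint_of_iUnion_eq_univ hXndisj hXncover
    fun n => (√(μ.real (Xn n)))⁻¹ • ⟪e n, f⟫
  obtain ⟨ha_memLp, ha_norm⟩ := memLp_two_and_integral_norm_sq_of_eqOn_smul_const hXnmeas
    hXndisj hXncover hXnpos hXnfin ha (hparseval f)
  refine ⟨a, ha_memLp, ha_norm, fun u hu => ?_⟩
  calc ⟪u, A ⟨f, hf⟩⟫ = ⟪A.adjoint ⟨u, hu⟩, f⟫ := (hadj ⟨u, hu⟩ ⟨f, hf⟩).symm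
    _ = ∑' n, ⟪e n, f⟫ * ⟪A.adjoint ⟨u, hu⟩, e n⟫ := by
      rw [← b.tsum_inner_mul_inner, hb]
      exact tsum_congr fun n => mul_comm _ _
    _ = ∫ x, a x * ⟪u, ψ x⟫ ∂μ := (integral_mul_eq_tsum_of_eqOn_smul_const hXnmeas hXndisj
      hXncover hXnpos hXnfin ha (hψ_inner u hu)
      (ha_memLp.integrable_mul (hψ_memLp u hu).1)).symm
end

section
/- Let A be a closed densely defined operator on H with range R(A) = H, A† ∈ B(H) its pseudo-inverse, ψ a continuous weak A-frame, and φ a Bessel weak A-dual of ψ. Define θ_x := (A†)* φ_x. Then θ : X → H is a Bessel function, and every u ∈ D(A*) satisfies the weak reproducing formula ⟨f,u⟩ = ∫_X ⟨f,θ_x⟩⟨ψ_x,u⟩ dμ(x) for all f ∈ H. -/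
open MeasureTheory Filter Topology
open scoped ComplexInnerProductSpace InnerProductSpace

section Bessel

variable {𝕜 : Type*} [RCLike 𝕜] {X : Type*} [MeasurableSpace X] (μ : Measure X)
  {E F : Type*} [NormedAddCommGroup E] [InnerProductSpace 𝕜 E]
  [NormedAddCommGroup F] [InnerProductSpace 𝕜 F]

def BesselBound (φ : X → E) (γ : ℝ) : Prop :=
  ∀ f : E, MemLp (fun x => ⟪f, φ x⟫_𝕜) 2 μ ∧ ∫ x, ‖⟪f, φ x⟫_𝕜‖ ^ 2 ∂μ ≤ γ * ‖f‖ ^ 2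

variable {μ}

theorem BesselBound.mono {φ : X → E} {γ γ' : ℝ} (h : BesselBound (𝕜 := 𝕜) μ φ γ)
    (hγ : γ ≤ γ') : BesselBound (𝕜 := 𝕜) μ φ γ' := fun f =>
  ⟨(h f).1, (h f).2.trans (by gcongr)⟩

theorem BesselBound.adjoint_comp [CompleteSpace E] [CompleteSpace F] {φ : X → F} {γ : ℝ}
    (h : BesselBound (𝕜 := 𝕜) μ φ γ) (hγ : 0 ≤ γ) (T : E →L[𝕜] F) :
    BesselBound (𝕜 := 𝕜) μ (fun x => ContinuousLinearMap.adjoint T (φ x)) (γ * ‖T‖ ^ 2) := by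
  intro f
  simp only [ContinuousLinearMap.adjoint_inner_right]
  refine ⟨(h (T f)).1, (h (T f)).2.trans ?_⟩
  calc γ * ‖T f‖ ^ 2 ≤ γ * (‖T‖ * ‖f‖) ^ 2 := by gcongr; exact T.le_opNorm f
    _ = γ * ‖T‖ ^ 2 * ‖f‖ ^ 2 := by ring

end Bessel

theorem inner_eq_integral_adjoint_of_rightInverse {𝕜 : Type*} [RCLike 𝕜]
    {X : Type*} [MeasurableSpace X] {μ : Measure X}
    {E F : Type*} [NormedAddCommGroup E] [InnerProductSpace 𝕜 E] [CompleteSpace E]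
    [NormedAddCommGroup F] [InnerProductSpace 𝕜 F] [CompleteSpace F]
    (A : E →ₗ.[𝕜] F) (T : F →L[𝕜] E) (hT_mem : ∀ f, T f ∈ A.domain)
    (hT : ∀ f, A ⟨T f, hT_mem f⟩ = f) (φ : X → E) (ψ : X → F) {u : F}
    (hdual : ∀ h : E, ∀ hh : h ∈ A.domain,
      ⟪u, A ⟨h, hh⟩⟫_𝕜 = ∫ x, ⟪φ x, h⟫_𝕜 * ⟪u, ψ x⟫_𝕜 ∂μ) (f : F) :
    ⟪u, f⟫_𝕜 = ∫ x, ⟪ContinuousLinearMap.adjoint T (φ x), f⟫_𝕜 * ⟪u, ψ x⟫_𝕜 ∂μ := by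
  simpa only [hT, ContinuousLinearMap.adjoint_inner_left] using hdual (T f) (hT_mem f)

theorem weak_reproducing_formula_general
    {H : Type*} [NormedAddCommGroup H] [InnerProductSpace ℂ H] [CompleteSpace H]
    {X : Type*} [MeasurableSpace X] (μ : Measure X)
    (A : H →ₗ.[ℂ] H)
    (Adag : H →L[ℂ] H)
    (hdag_mem : ∀ f : H, Adag f ∈ A.domain)
    (hdag : ∀ f : H, A ⟨Adag f, hdag_mem f⟩ = f)
    (ψ φ : X → H)
    (γ : ℝ) (hγ : 0 < γ)
    (hφBessel : ∀ f : H, MemLp (fun x => (⟪f, φ x⟫ : ℂ)) 2 μ ∧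
      ∫ x, ‖(⟪f, φ x⟫ : ℂ)‖ ^ 2 ∂μ ≤ γ * ‖f‖ ^ 2)
    (hdual : ∀ h : H, ∀ hh : h ∈ A.domain, ∀ u : H, u ∈ A.adjoint.domain →
      (⟪u, A ⟨h, hh⟩⟫ : ℂ) = ∫ x, (⟪φ x, h⟫ : ℂ) * (⟪u, ψ x⟫ : ℂ) ∂μ) :
    (∃ β > (0 : ℝ), ∀ f : H,
      MemLp (fun x => (⟪f, ContinuousLinearMap.adjoint Adag (φ x)⟫ : ℂ)) 2 μ ∧
      ∫ x, ‖(⟪f, ContinuousLinearMap.adjoint Adag (φ x)⟫ : ℂ)‖ ^ 2 ∂μ ≤ β * ‖f‖ ^ 2) ∧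
    (∀ u : H, u ∈ A.adjoint.domain → ∀ f : H,
      (⟪u, f⟫ : ℂ) =
        ∫ x, (⟪ContinuousLinearMap.adjoint Adag (φ x), f⟫ : ℂ) * (⟪u, ψ x⟫ : ℂ) ∂μ) := by
  have hθ : BesselBound μ (fun x => ContinuousLinearMap.adjoint Adag (φ x)) (γ * ‖Adag‖ ^ 2) :=
    BesselBound.adjoint_comp hφBessel hγ.le Adag
  refine ⟨⟨γ * ‖Adag‖ ^ 2 + 1, by positivity, hθ.mono (by linarith)⟩, fun u hu f => ?_⟩
  exact inner_eq_integral_adjoint_of_rightInverse A Adag hdag_mem hdag φ ψ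
    (fun h hh => hdual h hh u hu) f

/-- Let `A` be closed, densely defined with `R(A) = H`, and `A† ∈ B(H)` its
pseudo-inverse (`A A† = I`, `N(A†) = R(A)^⊥ = {0}`, `closure R(A†) = N(A)^⊥`). If `ψ` is
a continuous weak `A`-frame and `φ` a Bessel weak `A`-dual of `ψ`, then
`θ_x := (A†)* φ_x` is Bessel and `⟨f, u⟩ = ∫ ⟨f, θ_x⟩ ⟨ψ_x, u⟩ dμ` for all `f ∈ H`,
`u ∈ D(A*)`. (Paper inner products are `⟪·,·⟫` with swapped arguments.) -/
theorem weak_reproducing_formula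
    {H : Type*} [NormedAddCommGroup H] [InnerProductSpace ℂ H] [CompleteSpace H]
    {X : Type*} [MeasurableSpace X] (μ : Measure X)
    (A : H →ₗ.[ℂ] H) (hA : Dense (A.domain : Set H)) (hAclosed : A.IsClosed)
    (Adag : H →L[ℂ] H)
    (hdag_mem : ∀ f : H, Adag f ∈ A.domain)
    (hdag : ∀ f : H, A ⟨Adag f, hdag_mem f⟩ = f)
    (hdag_ker : ∀ f : H, Adag f = 0 → f = 0)
    (hdag_range : closure (Set.range Adag) =
      {f : H | ∀ g : A.domain, A g = 0 → (⟪(g : H), f⟫ : ℂ) = 0})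
    (ψ φ : X → H)
    (hψmeas : ∀ f : H, f ∈ A.adjoint.domain → Measurable fun x => (⟪f, ψ x⟫ : ℂ))
    (α : ℝ) (hα : 0 < α)
    (hframe : ∀ f : H, ∀ hf : f ∈ A.adjoint.domain,
      MemLp (fun x => (⟪f, ψ x⟫ : ℂ)) 2 μ ∧
      α * ‖A.adjoint ⟨f, hf⟩‖ ^ 2 ≤ ∫ x, ‖(⟪f, ψ x⟫ : ℂ)‖ ^ 2 ∂μ)
    (γ : ℝ) (hγ : 0 < γ)
    (hφBessel : ∀ f : H, MemLp (fun x => (⟪f, φ x⟫ : ℂ)) 2 μ ∧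
      ∫ x, ‖(⟪f, φ x⟫ : ℂ)‖ ^ 2 ∂μ ≤ γ * ‖f‖ ^ 2)
    (hdual : ∀ h : H, ∀ hh : h ∈ A.domain, ∀ u : H, u ∈ A.adjoint.domain →
      (⟪u, A ⟨h, hh⟩⟫ : ℂ) = ∫ x, (⟪φ x, h⟫ : ℂ) * (⟪u, ψ x⟫ : ℂ) ∂μ) :
    (∃ β > (0 : ℝ), ∀ f : H,
      MemLp (fun x => (⟪f, ContinuousLinearMap.adjoint Adag (φ x)⟫ : ℂ)) 2 μ ∧
      ∫ x, ‖(⟪f, ContinuousLinearMap.adjoint Adag (φ x)⟫ : ℂ)‖ ^ 2 ∂μ ≤ β * ‖f‖ ^ 2) ∧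
    (∀ u : H, u ∈ A.adjoint.domain → ∀ f : H,
      (⟪u, f⟫ : ℂ) =
        ∫ x, (⟪ContinuousLinearMap.adjoint Adag (φ x), f⟫ : ℂ) * (⟪u, ψ x⟫ : ℂ) ∂μ) :=
  weak_reproducing_formula_general μ A Adag hdag_mem hdag ψ φ γ hγ hφBessel hdual
end

section
/- Let J, H be Hilbert spaces, K ∈ B(J,H), ξ : X → J a continuous frame for J with dual frame ϑ : X → J. Then Kξ (i.e., x ↦ Kξ_x) is a continuous atomic system for K: it is Bessel, and for every f ∈ J the coefficients a_f(x) = ⟨f,ϑ_x⟩ satisfy ‖a_f‖₂ ≤ γ‖f‖ for some γ > 0 and ⟨Kf,h⟩ = ∫_X a_f(x)⟨Kξ_x,h⟩ dμ(x) for all h ∈ H. -/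
/-!
Through the adjoint, `⟪h, K ξ_x⟫ = ⟪(K†) h, ξ_x⟫`, so the Bessel bound and the reconstruction
formula for `K ξ` are those of `ξ` and of the pair `(ξ, ϑ)` evaluated at `(K†) h`. The one analytic
point is the bound on the coefficients `⟨f, ϑ_x⟩`: the dual family is only known to have
square-integrable coefficients, and the closed graph theorem turns this into boundedness of its
analysis operator `J → L²`.
-/

open MeasureTheory Filter Topology
open scoped ComplexInnerProductSpace InnerProductSpace InnerProduct ENNReal

namespace MeasureTheory

section FamilyToLp

variable {𝕜 E F X : Type*} [NontriviallyNormedField 𝕜]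
  [NormedAddCommGroup E] [NormedSpace 𝕜 E] [NormedAddCommGroup F] [NormedSpace 𝕜 F]
  [MeasurableSpace X] {μ : Measure X} {p : ℝ≥0∞}
  (L : X → E →L[𝕜] F) (hL : ∀ f, MemLp (fun x => L x f) p μ)

noncomputable def familyToLpₗ : E →ₗ[𝕜] Lp F p μ where
  toFun f := (hL f).toLp _
  map_add' f g := by
    rw [← MemLp.toLp_add]
    exact MemLp.toLp_congr _ _ (.of_forall fun x => map_add (L x) f g)
  map_smul' c f := by
    rw [RingHom.id_apply, ← MemLp.toLp_const_smul]
    exact MemLp.toLp_congr _ _ (.of_forall fun x => map_smul (L x) c f)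

theorem familyToLpₗ_ae_eq (f : E) : familyToLpₗ L hL f =ᵐ[μ] fun x => L x f :=
  (hL f).coeFn_toLp

variable [Fact (1 ≤ p)] [CompleteSpace E] [CompleteSpace F]

/-- The graph is closed because `Lp`-convergence gives an a.e. convergent subsequence, along which
`L x` is continuous. -/
theorem continuous_familyToLpₗ : Continuous (familyToLpₗ L hL) := by
  refine (familyToLpₗ L hL).continuous_of_seq_closed_graph fun u f g hu hTu => ?_
  obtain ⟨ns, hns, hae⟩ := (tendstoInMeasure_of_tendsto_Lp hTu).exists_seq_tendsto_ae
  have hcoe := ae_all_iff.2 fun n => familyToLpₗ_ae_eq L hL (u n)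
  refine Lp.ext (EventuallyEq.symm ?_ |>.trans (familyToLpₗ_ae_eq L hL f).symm)
  filter_upwards [hae, hcoe] with x hx hc
  simp only [Function.comp_apply, hc] at hx
  exact tendsto_nhds_unique (((L x).continuous.tendsto f).comp (hu.comp hns.tendsto_atTop)) hx

noncomputable def familyToLp : E →L[𝕜] Lp F p μ :=
  ⟨familyToLpₗ L hL, continuous_familyToLpₗ L hL⟩

end FamilyToLp

theorem MemLp.sqrt_integral_norm_sq_eq_norm_toLp {X F : Type*} [MeasurableSpace X]
    {μ : Measure X} [NormedAddCommGroup F] {f : X → F} (hf : MemLp f 2 μ) :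
    √(∫ x, ‖f x‖ ^ 2 ∂μ) = ‖hf.toLp f‖ := by
  rw [Lp.norm_toLp, hf.eLpNorm_eq_integral_rpow_norm two_ne_zero ENNReal.ofNat_ne_top,
    ENNReal.toReal_ofReal (by positivity), Real.sqrt_eq_rpow]
  norm_num

section InnerProduct

variable {𝕜 J H X : Type*} [RCLike 𝕜]
  [NormedAddCommGroup J] [InnerProductSpace 𝕜 J] [NormedAddCommGroup H] [InnerProductSpace 𝕜 H]
  [MeasurableSpace X] {μ : Measure X}

theorem MemLp.inner_swap {p : ℝ≥0∞} {ϑ : X → J} {f : J} (h : MemLp (fun x => ⟪f, ϑ x⟫_𝕜) p μ) :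
    MemLp (fun x => ⟪ϑ x, f⟫_𝕜) p μ := by
  simpa only [Pi.star_def, RCLike.star_def, inner_conj_symm] using h.star

theorem exists_sqrt_integral_norm_inner_sq_le [CompleteSpace J] {ϑ : X → J}
    (hϑ : ∀ f, MemLp (fun x => ⟪ϑ x, f⟫_𝕜) 2 μ) :
    ∃ γ > 0, ∀ f, √(∫ x, ‖⟪ϑ x, f⟫_𝕜‖ ^ 2 ∂μ) ≤ γ * ‖f‖ := by
  have : Fact ((1 : ℝ≥0∞) ≤ 2) := ⟨one_le_two⟩
  let T := familyToLp (fun x => innerSL 𝕜 (ϑ x)) hϑ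
  refine ⟨‖T‖ + 1, by positivity, fun f => ?_⟩
  calc √(∫ x, ‖⟪ϑ x, f⟫_𝕜‖ ^ 2 ∂μ) = ‖T f‖ := (hϑ f).sqrt_integral_norm_sq_eq_norm_toLp
    _ ≤ ‖T‖ * ‖f‖ := T.le_opNorm f
    _ ≤ (‖T‖ + 1) * ‖f‖ := by gcongr; linarith

variable (𝕜) in
def IsBesselFamily (μ : Measure X) (ξ : X → J) (β : ℝ) : Prop :=
  ∀ f : J, MemLp (fun x => ⟪f, ξ x⟫_𝕜) 2 μ ∧ ∫ x, ‖⟪f, ξ x⟫_𝕜‖ ^ 2 ∂μ ≤ β * ‖f‖ ^ 2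

theorem IsBesselFamily.mono {ξ : X → J} {β β' : ℝ} (h : IsBesselFamily 𝕜 μ ξ β) (hβ : β ≤ β') :
    IsBesselFamily 𝕜 μ ξ β' := fun f =>
  ⟨(h f).1, (h f).2.trans (mul_le_mul_of_nonneg_right hβ (sq_nonneg _))⟩

theorem IsBesselFamily.map [CompleteSpace J] [CompleteSpace H] {ξ : X → J} {β : ℝ}
    (h : IsBesselFamily 𝕜 μ ξ β) (hβ : 0 ≤ β) (K : J →L[𝕜] H) :
    IsBesselFamily 𝕜 μ (fun x => K (ξ x)) (β * ‖K‖ ^ 2) := by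
  intro g
  simp only [← ContinuousLinearMap.adjoint_inner_left]
  refine ⟨(h _).1, ?_⟩
  calc ∫ x, ‖⟪(K†) g, ξ x⟫_𝕜‖ ^ 2 ∂μ ≤ β * ‖(K†) g‖ ^ 2 := (h _).2
    _ ≤ β * (‖K‖ * ‖g‖) ^ 2 := by
      gcongr
      simpa only [LinearIsometryEquiv.norm_map] using (K†).le_opNorm g
    _ = β * ‖K‖ ^ 2 * ‖g‖ ^ 2 := by ring

theorem inner_map_eq_integral_of_dual [CompleteSpace J] [CompleteSpace H] {ξ ϑ : X → J}
    (hdual : ∀ f g : J, ⟪g, f⟫_𝕜 = ∫ x, ⟪ϑ x, f⟫_𝕜 * ⟪g, ξ x⟫_𝕜 ∂μ)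
    (K : J →L[𝕜] H) (f : J) (h : H) :
    ⟪h, K f⟫_𝕜 = ∫ x, ⟪ϑ x, f⟫_𝕜 * ⟪h, K (ξ x)⟫_𝕜 ∂μ := by
  simpa only [ContinuousLinearMap.adjoint_inner_left] using hdual f ((K†) h)

end InnerProduct

end MeasureTheory

/-- Mathlib's `⟪u, v⟫` is conjugate-linear in `u`, so the paper's `⟨f, ϑ_x⟩` is `⟪ϑ x, f⟫` here. -/
theorem image_frame_atomic_system_general
    {J H : Type*}
    [NormedAddCommGroup J] [InnerProductSpace ℂ J] [CompleteSpace J]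
    [NormedAddCommGroup H] [InnerProductSpace ℂ H] [CompleteSpace H]
    {X : Type*} [MeasurableSpace X] (μ : Measure X)
    (K : J →L[ℂ] H) (ξ ϑ : X → J)
    (α β : ℝ) (hβ : 0 < β)
    (hξframe : ∀ f : J, MemLp (fun x => (⟪f, ξ x⟫ : ℂ)) 2 μ ∧
      α * ‖f‖ ^ 2 ≤ ∫ x, ‖(⟪f, ξ x⟫ : ℂ)‖ ^ 2 ∂μ ∧
      ∫ x, ‖(⟪f, ξ x⟫ : ℂ)‖ ^ 2 ∂μ ≤ β * ‖f‖ ^ 2)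
    (hϑBessel : ∀ f : J, MemLp (fun x => (⟪f, ϑ x⟫ : ℂ)) 2 μ)
    (hdual : ∀ f g : J,
      (⟪g, f⟫ : ℂ) = ∫ x, (⟪ϑ x, f⟫ : ℂ) * (⟪g, ξ x⟫ : ℂ) ∂μ) :
    (∃ b > (0 : ℝ), ∀ h : H,
      MemLp (fun x => (⟪h, K (ξ x)⟫ : ℂ)) 2 μ ∧
      ∫ x, ‖(⟪h, K (ξ x)⟫ : ℂ)‖ ^ 2 ∂μ ≤ b * ‖h‖ ^ 2) ∧
    ∃ γ > (0 : ℝ), ∀ f : J,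
      MemLp (fun x => (⟪ϑ x, f⟫ : ℂ)) 2 μ ∧
      Real.sqrt (∫ x, ‖(⟪ϑ x, f⟫ : ℂ)‖ ^ 2 ∂μ) ≤ γ * ‖f‖ ∧
      ∀ h : H, (⟪h, K f⟫ : ℂ) =
        ∫ x, (⟪ϑ x, f⟫ : ℂ) * (⟪h, K (ξ x)⟫ : ℂ) ∂μ := by
  have hξ : IsBesselFamily ℂ μ ξ β := fun f => ⟨(hξframe f).1, (hξframe f).2.2⟩
  have hcoeff : ∀ f, MemLp (fun x => (⟪ϑ x, f⟫ : ℂ)) 2 μ := fun f => (hϑBessel f).inner_swap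
  obtain ⟨γ, hγ, hbound⟩ := exists_sqrt_integral_norm_inner_sq_le hcoeff
  refine ⟨⟨β * (‖K‖ ^ 2 + 1), by positivity, (hξ.map hβ.le K).mono (by linarith)⟩,
    γ, hγ, fun f => ⟨hcoeff f, hbound f, inner_map_eq_integral_of_dual hdual K f⟩⟩

/-- If `K ∈ B(J, H)` and `ξ` is a continuous frame for `J` with dual frame `ϑ`, then
`K ξ` is a continuous atomic system for `K`: it is Bessel, and the coefficients
`a_f x = ⟨f, ϑ_x⟩` satisfy `‖a_f‖₂ ≤ γ ‖f‖` for some `γ > 0` and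
`⟨K f, h⟩ = ∫ a_f x ⟨K ξ_x, h⟩ dμ` for all `h ∈ H`. (Paper inner products are
`⟪·,·⟫` with swapped arguments.) -/
theorem image_frame_atomic_system
    {J H : Type*}
    [NormedAddCommGroup J] [InnerProductSpace ℂ J] [CompleteSpace J]
    [NormedAddCommGroup H] [InnerProductSpace ℂ H] [CompleteSpace H]
    {X : Type*} [MeasurableSpace X] (μ : Measure X)
    (K : J →L[ℂ] H) (ξ ϑ : X → J)
    (hξmeas : ∀ f : J, Measurable fun x => (⟪f, ξ x⟫ : ℂ))
    (hϑmeas : ∀ f : J, Measurable fun x => (⟪f, ϑ x⟫ : ℂ))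
    (α β : ℝ) (hα : 0 < α) (hβ : 0 < β)
    (hξframe : ∀ f : J, MemLp (fun x => (⟪f, ξ x⟫ : ℂ)) 2 μ ∧
      α * ‖f‖ ^ 2 ≤ ∫ x, ‖(⟪f, ξ x⟫ : ℂ)‖ ^ 2 ∂μ ∧
      ∫ x, ‖(⟪f, ξ x⟫ : ℂ)‖ ^ 2 ∂μ ≤ β * ‖f‖ ^ 2)
    (hϑBessel : ∀ f : J, MemLp (fun x => (⟪f, ϑ x⟫ : ℂ)) 2 μ)
    (hdual : ∀ f g : J,
      (⟪g, f⟫ : ℂ) = ∫ x, (⟪ϑ x, f⟫ : ℂ) * (⟪g, ξ x⟫ : ℂ) ∂μ) :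
    (∃ b > (0 : ℝ), ∀ h : H,
      MemLp (fun x => (⟪h, K (ξ x)⟫ : ℂ)) 2 μ ∧
      ∫ x, ‖(⟪h, K (ξ x)⟫ : ℂ)‖ ^ 2 ∂μ ≤ b * ‖h‖ ^ 2) ∧
    ∃ γ > (0 : ℝ), ∀ f : J,
      MemLp (fun x => (⟪ϑ x, f⟫ : ℂ)) 2 μ ∧
      Real.sqrt (∫ x, ‖(⟪ϑ x, f⟫ : ℂ)‖ ^ 2 ∂μ) ≤ γ * ‖f‖ ∧
      ∀ h : H, (⟪h, K f⟫ : ℂ) =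
        ∫ x, (⟪ϑ x, f⟫ : ℂ) * (⟪h, K (ξ x)⟫ : ℂ) ∂μ :=
  image_frame_atomic_system_general μ K ξ ϑ α β hβ hξframe hϑBessel hdual
end

section
/- Let (X,μ) be σ-finite, K ∈ B(J,H), and ψ : X → H weakly measurable. The following are equivalent: (i) ψ is a continuous K-frame for H; (ii) the synthesis operator C_ψ* is bounded and R(K) ⊆ R(C_ψ*); (iii) C_ψ* is bounded and K = C_ψ* M for some M ∈ B(J, L²(X,μ)); (iv) ψ is Bessel and S_ψ = C_ψ* C_ψ ≥ α K K* on H for some α > 0; (v) K = S_ψ^{1/2} U for some U ∈ B(J,H). -/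
open MeasureTheory ContinuousLinearMap
open scoped ComplexInnerProductSpace InnerProductSpace

/-!
Everything reduces to Douglas' factorization lemma: for bounded operators `B : G → H` and
`K : J → H` between Hilbert spaces, `R(K) ⊆ R(B)` iff `K = B M` for a bounded `M` iff
`α ‖K* h‖² ≤ ‖B* h‖²` for some `α > 0`. A Bessel family has a bounded analysis operator `C` with
`∫ |⟪h, ψ x⟫|² dμ = ‖C h‖²`, so the lower frame bound is the third condition for `B = C*`.
For (iv), `⟪S_ψ f, f⟫ = ‖C f‖²`; for (v), `S_ψ^{1/2}` is self-adjoint with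
`‖S_ψ^{1/2} h‖ = ‖C h‖`, so the lemma applies to `B = S_ψ^{1/2}` as well.
-/

section Douglas

variable {𝕜 E F G H J : Type*} [RCLike 𝕜]

theorem ContinuousLinearMap.exists_comp_eq_of_injective
    [NormedAddCommGroup E] [NormedSpace 𝕜 E] [CompleteSpace E]
    [NormedAddCommGroup F] [NormedSpace 𝕜 F]
    [NormedAddCommGroup J] [NormedSpace 𝕜 J] [CompleteSpace J]
    (T : E →L[𝕜] F) (hT : Function.Injective T) (K : J →L[𝕜] F)
    (hK : Set.range K ⊆ Set.range T) : ∃ M : J →L[𝕜] E, K = T.comp M := by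
  obtain ⟨M₀, hTM⟩ : ∃ M₀ : J →ₗ[𝕜] E, ∀ j, T (M₀ j) = K j :=
    ⟨(LinearEquiv.ofInjective (T : E →ₗ[𝕜] F) hT).symm.toLinearMap ∘ₗ
      (K : J →ₗ[𝕜] F).codRestrict _ fun j => hK ⟨j, rfl⟩, fun j =>
      LinearEquiv.ofInjective_symm_apply (f := (T : E →ₗ[𝕜] F)) (h := hT) _⟩
  -- closed graph theorem: `T` is injective and continuous, so it pins down limits of `M₀ uₙ`
  refine ⟨.ofSeqClosedGraph fun u j g hu hMu => hT ?_, ext fun j => (hTM j).symm⟩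
  have hTMu : T ∘ M₀ ∘ u = K ∘ u := funext fun n => hTM (u n)
  refine tendsto_nhds_unique ((T.continuous.tendsto g).comp hMu) ?_
  rw [hTMu, hTM]
  exact (K.continuous.tendsto j).comp hu

variable [NormedAddCommGroup G] [InnerProductSpace 𝕜 G] [CompleteSpace G]
  [NormedAddCommGroup H] [InnerProductSpace 𝕜 H]
  [NormedAddCommGroup J] [InnerProductSpace 𝕜 J] [CompleteSpace J]

theorem ContinuousLinearMap.exists_comp_eq_of_range_subset (B : G →L[𝕜] H) (K : J →L[𝕜] H)
    (hK : Set.range K ⊆ Set.range B) : ∃ M : J →L[𝕜] G, K = B.comp M := by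
  set N : Submodule 𝕜 G := LinearMap.ker (B : G →ₗ[𝕜] H)
  have : CompleteSpace N := B.isClosed_ker.completeSpace_coe
  have hinj : Function.Injective (B.comp Nᗮ.subtypeL) := by
    refine (injective_iff_map_eq_zero _).2 fun v hv => Subtype.ext ?_
    exact (Submodule.mem_bot 𝕜).1 ((Submodule.inf_orthogonal_eq_bot N).le ⟨hv, v.2⟩)
  have hrange : Set.range B ⊆ Set.range (B.comp Nᗮ.subtypeL) := by
    rintro - ⟨g, rfl⟩
    refine ⟨⟨Nᗮ.starProjection g, Nᗮ.starProjection_apply_mem g⟩, ?_⟩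
    have hN : B (N.starProjection g) = 0 := N.starProjection_apply_mem g
    calc B (Nᗮ.starProjection g) = B (N.starProjection g) + B (Nᗮ.starProjection g) := by
          rw [hN, zero_add]
      _ = B g := by rw [← map_add, N.starProjection_add_starProjection_orthogonal]
  obtain ⟨M, rfl⟩ := (B.comp Nᗮ.subtypeL).exists_comp_eq_of_injective hinj K (hK.trans hrange)
  exact ⟨Nᗮ.subtypeL.comp M, rfl⟩

theorem ContinuousLinearMap.mem_range_of_norm_inner_le [CompleteSpace H] (B : G →L[𝕜] H)
    (x : H) (c : ℝ) (hx : ∀ h, ‖⟪x, h⟫_𝕜‖ ≤ c * ‖adjoint B h‖) : x ∈ Set.range B := by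
  -- `adjoint B h ↦ ⟪x, h⟫` is a well-defined, `c`-bounded functional on the range of
  -- `adjoint B`; extend it by Hahn–Banach and represent it by Riesz
  set A : H →ₗ[𝕜] G := (adjoint B).toLinearMap
  have hker : LinearMap.ker A ≤ LinearMap.ker (innerₛₗ 𝕜 x) := fun h hh => by
    have hBh : adjoint B h = 0 := hh
    simpa [hBh] using hx h
  let ℓ₀ : LinearMap.range A →ₗ[𝕜] 𝕜 :=
    (LinearMap.ker A).liftQ (innerₛₗ 𝕜 x) hker ∘ₗ A.quotKerEquivRange.symm.toLinearMap
  have hℓ₀ : ∀ h, ℓ₀ ⟨A h, LinearMap.mem_range_self A h⟩ = ⟪x, h⟫_𝕜 := fun h => by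
    simp [ℓ₀, LinearMap.quotKerEquivRange_symm_apply_image]
  let ℓ : LinearMap.range A →L[𝕜] 𝕜 := ℓ₀.mkContinuous c fun ⟨_, h, rfl⟩ => by
    rw [hℓ₀]
    exact hx h
  obtain ⟨F, hF, -⟩ := exists_extension_norm_eq _ ℓ
  refine ⟨(InnerProductSpace.toDual 𝕜 G).symm F, ext_inner_right 𝕜 fun h => ?_⟩
  rw [← adjoint_inner_right, InnerProductSpace.toDual_symm_apply]
  exact (hF ⟨_, LinearMap.mem_range_self A h⟩).trans (hℓ₀ h)

theorem ContinuousLinearMap.range_subset_range_iff_exists_comp (B : G →L[𝕜] H) (K : J →L[𝕜] H) :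
    Set.range K ⊆ Set.range B ↔ ∃ M : J →L[𝕜] G, K = B.comp M := by
  refine ⟨B.exists_comp_eq_of_range_subset K, ?_⟩
  rintro ⟨M, rfl⟩ - ⟨j, rfl⟩
  exact ⟨M j, rfl⟩

theorem ContinuousLinearMap.range_subset_range_iff_exists_lower_bound [CompleteSpace H]
    (B : G →L[𝕜] H) (K : J →L[𝕜] H) :
    Set.range K ⊆ Set.range B ↔
      ∃ α > (0 : ℝ), ∀ h, α * ‖adjoint K h‖ ^ 2 ≤ ‖adjoint B h‖ ^ 2 := by
  constructor
  · intro hK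
    obtain ⟨M, rfl⟩ := B.exists_comp_eq_of_range_subset K hK
    refine ⟨(‖adjoint M‖ ^ 2 + 1)⁻¹, by positivity, fun h => ?_⟩
    rw [adjoint_comp, comp_apply, inv_mul_le_iff₀ (by positivity)]
    calc ‖adjoint M (adjoint B h)‖ ^ 2 ≤ (‖adjoint M‖ * ‖adjoint B h‖) ^ 2 := by
          gcongr
          exact le_opNorm _ _
      _ ≤ (‖adjoint M‖ ^ 2 + 1) * ‖adjoint B h‖ ^ 2 := by
          rw [mul_pow]
          gcongr
          linarith
  · rintro ⟨α, hα, hK⟩ - ⟨j, rfl⟩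
    refine B.mem_range_of_norm_inner_le (K j) (‖j‖ / √α) fun h => ?_
    have hKh : √α * ‖adjoint K h‖ ≤ ‖adjoint B h‖ := by
      rw [← pow_le_pow_iff_left₀ (by positivity) (norm_nonneg _) two_ne_zero, mul_pow,
        Real.sq_sqrt hα.le]
      exact hK h
    calc ‖⟪K j, h⟫_𝕜‖ = ‖⟪j, adjoint K h⟫_𝕜‖ := by rw [adjoint_inner_right]
      _ ≤ ‖j‖ * ‖adjoint K h‖ := norm_inner_le_norm _ _
      _ ≤ ‖j‖ / √α * ‖adjoint B h‖ := by
          rw [div_mul_eq_mul_div, le_div_iff₀ (Real.sqrt_pos.2 hα), mul_assoc, mul_comm _ √α]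
          gcongr

end Douglas

section SquareRoot

variable {𝕜 E H J : Type*} [RCLike 𝕜]
  [NormedAddCommGroup E] [InnerProductSpace 𝕜 E] [CompleteSpace E]
  [NormedAddCommGroup H] [InnerProductSpace 𝕜 H] [CompleteSpace H]
  [NormedAddCommGroup J] [InnerProductSpace 𝕜 J] [CompleteSpace J]

theorem ContinuousLinearMap.IsPositive.norm_apply_eq {S : H →L[𝕜] H} (hS : S.IsPositive)
    {C : H →L[𝕜] E} (hSC : S.comp S = (adjoint C).comp C) (h : H) : ‖S h‖ = ‖C h‖ := by
  have hSadj : adjoint S = S := hS.isSelfAdjoint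
  rw [← pow_left_inj₀ (norm_nonneg _) (norm_nonneg _) two_ne_zero,
    apply_norm_sq_eq_inner_adjoint_right, apply_norm_sq_eq_inner_adjoint_right, hSadj, hSC]

theorem ContinuousLinearMap.IsPositive.exists_comp_eq_iff {S : H →L[𝕜] H} (hS : S.IsPositive)
    {C : H →L[𝕜] E} (hSC : S.comp S = (adjoint C).comp C) (K : J →L[𝕜] H) :
    (∃ U : J →L[𝕜] H, K = S.comp U) ↔
      ∃ α > (0 : ℝ), ∀ h, α * ‖adjoint K h‖ ^ 2 ≤ ‖C h‖ ^ 2 := by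
  have hSadj : adjoint S = S := hS.isSelfAdjoint
  simp only [← range_subset_range_iff_exists_comp, range_subset_range_iff_exists_lower_bound,
    hSadj, hS.norm_apply_eq hSC]

end SquareRoot

theorem ContinuousLinearMap.exists_sqrt_comp_iff {E H J : Type*}
    [NormedAddCommGroup E] [InnerProductSpace ℂ E] [CompleteSpace E]
    [NormedAddCommGroup H] [InnerProductSpace ℂ H] [CompleteSpace H]
    [NormedAddCommGroup J] [InnerProductSpace ℂ J] [CompleteSpace J]
    (C : H →L[ℂ] E) (K : J →L[ℂ] H) :
    (∃ S : H →L[ℂ] H, S.IsPositive ∧ S.comp S = (adjoint C).comp C ∧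
        ∃ U : J →L[ℂ] H, K = S.comp U) ↔
      ∃ α > (0 : ℝ), ∀ h, α * ‖adjoint K h‖ ^ 2 ≤ ‖C h‖ ^ 2 := by
  refine ⟨fun ⟨S, hS, hSC, hK⟩ => (hS.exists_comp_eq_iff hSC K).1 hK, fun hK => ?_⟩
  have hCC : 0 ≤ (adjoint C).comp C := (nonneg_iff_isPositive _).2 (isPositive_adjoint_comp_self C)
  have hS : (CFC.sqrt ((adjoint C).comp C)).IsPositive :=
    (nonneg_iff_isPositive _).1 (CFC.sqrt_nonneg _)
  have hSC := CFC.sqrt_mul_sqrt_self _ hCC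
  exact ⟨_, hS, hSC, (hS.exists_comp_eq_iff hSC K).2 hK⟩

section Frame

variable {𝕜 H J X : Type*} [RCLike 𝕜] [NormedAddCommGroup H] [InnerProductSpace 𝕜 H]
  [MeasurableSpace X] (μ : Measure X)

def IsAnalysisOperator (ψ : X → H) (C : H →L[𝕜] Lp 𝕜 2 μ) : Prop :=
  ∀ f, (C f : X → 𝕜) =ᵐ[μ] fun x => ⟪ψ x, f⟫_𝕜

variable (𝕜) in
def IsBessel (ψ : X → H) : Prop :=
  ∃ β > (0 : ℝ), ∀ h : H,
    MemLp (fun x => ⟪h, ψ x⟫_𝕜) 2 μ ∧ ∫ x, ‖⟪h, ψ x⟫_𝕜‖ ^ 2 ∂μ ≤ β * ‖h‖ ^ 2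

def IsContKFrame [CompleteSpace H] [NormedAddCommGroup J] [InnerProductSpace 𝕜 J]
    [CompleteSpace J] (K : J →L[𝕜] H) (ψ : X → H) : Prop :=
  ∃ α > (0 : ℝ), ∃ β > (0 : ℝ), ∀ h : H,
    MemLp (fun x => ⟪h, ψ x⟫_𝕜) 2 μ ∧
    α * ‖adjoint K h‖ ^ 2 ≤ ∫ x, ‖⟪h, ψ x⟫_𝕜‖ ^ 2 ∂μ ∧ ∫ x, ‖⟪h, ψ x⟫_𝕜‖ ^ 2 ∂μ ≤ β * ‖h‖ ^ 2

variable {μ}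

theorem MeasureTheory.Lp.norm_sq_eq_integral_norm_sq {E : Type*} [NormedAddCommGroup E]
    [InnerProductSpace 𝕜 E] (F : Lp E 2 μ) : ‖F‖ ^ 2 = ∫ x, ‖F x‖ ^ 2 ∂μ := by
  rw [← inner_self_eq_norm_sq (𝕜 := 𝕜), L2.inner_def, ← integral_re (L2.integrable_inner F F)]
  simp only [inner_self_eq_norm_sq]

theorem memLp_inner_comm {ψ : X → H} {f : H} :
    MemLp (fun x => ⟪ψ x, f⟫_𝕜) 2 μ ↔ MemLp (fun x => ⟪f, ψ x⟫_𝕜) 2 μ :=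
  ⟨fun hψ => by convert hψ.star using 1; ext x; simp,
    fun hψ => by convert hψ.star using 1; ext x; simp⟩

theorem integral_norm_inner_sq_eq {ψ : X → H} {f : H} {F : Lp 𝕜 2 μ}
    (hF : (F : X → 𝕜) =ᵐ[μ] fun x => ⟪ψ x, f⟫_𝕜) : ∫ x, ‖⟪f, ψ x⟫_𝕜‖ ^ 2 ∂μ = ‖F‖ ^ 2 := by
  rw [Lp.norm_sq_eq_integral_norm_sq (𝕜 := 𝕜)]
  refine integral_congr_ae (hF.mono fun x hx => ?_)
  simp only [hx, norm_inner_symm]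

namespace IsAnalysisOperator

variable {ψ : X → H} {C : H →L[𝕜] Lp 𝕜 2 μ}

theorem integral_norm_inner_sq (hC : IsAnalysisOperator μ ψ C) (h : H) :
    ∫ x, ‖⟪h, ψ x⟫_𝕜‖ ^ 2 ∂μ = ‖C h‖ ^ 2 :=
  integral_norm_inner_sq_eq (hC h)

theorem isBessel (hC : IsAnalysisOperator μ ψ C) : IsBessel 𝕜 μ ψ := by
  refine ⟨‖C‖ ^ 2 + 1, by positivity, fun h => ⟨?_, ?_⟩⟩
  · exact memLp_inner_comm.1 ((Lp.memLp (C h)).ae_eq (hC h))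
  · rw [hC.integral_norm_inner_sq]
    calc ‖C h‖ ^ 2 ≤ (‖C‖ * ‖h‖) ^ 2 := by
          gcongr
          exact C.le_opNorm h
      _ ≤ (‖C‖ ^ 2 + 1) * ‖h‖ ^ 2 := by
          rw [mul_pow]
          gcongr
          linarith

end IsAnalysisOperator

theorem IsBessel.exists_isAnalysisOperator {ψ : X → H} (hψ : IsBessel 𝕜 μ ψ) :
    ∃ C : H →L[𝕜] Lp 𝕜 2 μ, IsAnalysisOperator μ ψ C := by
  obtain ⟨β, hβ, hψ⟩ := hψ
  have hmem : ∀ f, MemLp (fun x => ⟪ψ x, f⟫_𝕜) 2 μ := fun f => memLp_inner_comm.2 (hψ f).1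
  let L : H →ₗ[𝕜] Lp 𝕜 2 μ :=
    { toFun := fun f => (hmem f).toLp _
      map_add' := fun f g => by
        rw [← MemLp.toLp_add]
        exact MemLp.toLp_congr _ _ (.of_forall fun x => inner_add_right _ _ _)
      map_smul' := fun a f => by
        rw [RingHom.id_apply, ← MemLp.toLp_const_smul]
        exact MemLp.toLp_congr _ _ (.of_forall fun x => inner_smul_right _ _ _) }
  have hL : ∀ f, (L f : X → 𝕜) =ᵐ[μ] fun x => ⟪ψ x, f⟫_𝕜 := fun f => (hmem f).coeFn_toLp
  refine ⟨L.mkContinuous √β fun f => ?_, hL⟩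
  rw [← pow_le_pow_iff_left₀ (norm_nonneg _) (by positivity) two_ne_zero, mul_pow,
    Real.sq_sqrt hβ.le, ← integral_norm_inner_sq_eq (hL f)]
  exact (hψ f).2

theorem isContKFrame_iff [CompleteSpace H] [NormedAddCommGroup J] [InnerProductSpace 𝕜 J]
    [CompleteSpace J] (K : J →L[𝕜] H) (ψ : X → H) :
    IsContKFrame μ K ψ ↔ ∃ C : H →L[𝕜] Lp 𝕜 2 μ, IsAnalysisOperator μ ψ C ∧
      ∃ α > (0 : ℝ), ∀ h, α * ‖adjoint K h‖ ^ 2 ≤ ‖C h‖ ^ 2 := by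
  constructor
  · rintro ⟨α, hα, β, hβ, hψ⟩
    obtain ⟨C, hC⟩ :=
      IsBessel.exists_isAnalysisOperator ⟨β, hβ, fun h => ⟨(hψ h).1, (hψ h).2.2⟩⟩
    exact ⟨C, hC, α, hα, fun h => hC.integral_norm_inner_sq h ▸ (hψ h).2.1⟩
  · rintro ⟨C, hC, α, hα, hK⟩
    obtain ⟨β, hβ, hψ⟩ := hC.isBessel
    refine ⟨α, hα, β, hβ, fun h => ⟨(hψ h).1, ?_, (hψ h).2⟩⟩
    rw [hC.integral_norm_inner_sq]
    exact hK h

end Frame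

/-- A bounded `C : H → L²(X, μ)` with `C f = (x ↦ ⟪ψ x, f⟫)` a.e. is the analysis operator, so
`C*` is the synthesis operator and `C* C = S_ψ`; in (v), `S` is the positive square root of `S_ψ`. -/
theorem cont_K_frame_characterizations_general
    {J H : Type*}
    [NormedAddCommGroup J] [InnerProductSpace ℂ J] [CompleteSpace J]
    [NormedAddCommGroup H] [InnerProductSpace ℂ H] [CompleteSpace H]
    {X : Type*} [MeasurableSpace X] (μ : Measure X)
    (K : J →L[ℂ] H) (ψ : X → H) :
    -- (i) ψ is a continuous K-frame
    ((∃ α > (0 : ℝ), ∃ β > (0 : ℝ), ∀ h : H,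
        MemLp (fun x => (⟪h, ψ x⟫ : ℂ)) 2 μ ∧
        α * ‖ContinuousLinearMap.adjoint K h‖ ^ 2 ≤ ∫ x, ‖(⟪h, ψ x⟫ : ℂ)‖ ^ 2 ∂μ ∧
        ∫ x, ‖(⟪h, ψ x⟫ : ℂ)‖ ^ 2 ∂μ ≤ β * ‖h‖ ^ 2) ↔
      -- (ii) C_ψ* bounded and R(K) ⊆ R(C_ψ*)
      (∃ C : H →L[ℂ] Lp ℂ 2 μ,
        (∀ f : H, (C f : X → ℂ) =ᵐ[μ] fun x => (⟪ψ x, f⟫ : ℂ)) ∧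
        Set.range K ⊆ Set.range (ContinuousLinearMap.adjoint C))) ∧
    -- (i) ↔ (iii) : K = C_ψ* M
    ((∃ α > (0 : ℝ), ∃ β > (0 : ℝ), ∀ h : H,
        MemLp (fun x => (⟪h, ψ x⟫ : ℂ)) 2 μ ∧
        α * ‖ContinuousLinearMap.adjoint K h‖ ^ 2 ≤ ∫ x, ‖(⟪h, ψ x⟫ : ℂ)‖ ^ 2 ∂μ ∧
        ∫ x, ‖(⟪h, ψ x⟫ : ℂ)‖ ^ 2 ∂μ ≤ β * ‖h‖ ^ 2) ↔
      (∃ C : H →L[ℂ] Lp ℂ 2 μ,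
        (∀ f : H, (C f : X → ℂ) =ᵐ[μ] fun x => (⟪ψ x, f⟫ : ℂ)) ∧
        ∃ M : J →L[ℂ] Lp ℂ 2 μ, K = (ContinuousLinearMap.adjoint C).comp M)) ∧
    -- (i) ↔ (iv) : ψ Bessel and S_ψ ≥ α K K*
    ((∃ α > (0 : ℝ), ∃ β > (0 : ℝ), ∀ h : H,
        MemLp (fun x => (⟪h, ψ x⟫ : ℂ)) 2 μ ∧
        α * ‖ContinuousLinearMap.adjoint K h‖ ^ 2 ≤ ∫ x, ‖(⟪h, ψ x⟫ : ℂ)‖ ^ 2 ∂μ ∧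
        ∫ x, ‖(⟪h, ψ x⟫ : ℂ)‖ ^ 2 ∂μ ≤ β * ‖h‖ ^ 2) ↔
      ((∃ β > (0 : ℝ), ∀ h : H,
          MemLp (fun x => (⟪h, ψ x⟫ : ℂ)) 2 μ ∧
          ∫ x, ‖(⟪h, ψ x⟫ : ℂ)‖ ^ 2 ∂μ ≤ β * ‖h‖ ^ 2) ∧
        ∃ C : H →L[ℂ] Lp ℂ 2 μ,
          (∀ f : H, (C f : X → ℂ) =ᵐ[μ] fun x => (⟪ψ x, f⟫ : ℂ)) ∧
          ∃ α > (0 : ℝ), ∀ f : H,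
            α * ‖ContinuousLinearMap.adjoint K f‖ ^ 2 ≤
              RCLike.re (⟪f, ((ContinuousLinearMap.adjoint C).comp C) f⟫ : ℂ))) ∧
    -- (i) ↔ (v) : K = S_ψ^{1/2} U
    ((∃ α > (0 : ℝ), ∃ β > (0 : ℝ), ∀ h : H,
        MemLp (fun x => (⟪h, ψ x⟫ : ℂ)) 2 μ ∧
        α * ‖ContinuousLinearMap.adjoint K h‖ ^ 2 ≤ ∫ x, ‖(⟪h, ψ x⟫ : ℂ)‖ ^ 2 ∂μ ∧
        ∫ x, ‖(⟪h, ψ x⟫ : ℂ)‖ ^ 2 ∂μ ≤ β * ‖h‖ ^ 2) ↔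
      (∃ C : H →L[ℂ] Lp ℂ 2 μ,
        (∀ f : H, (C f : X → ℂ) =ᵐ[μ] fun x => (⟪ψ x, f⟫ : ℂ)) ∧
        ∃ S : H →L[ℂ] H, S.IsPositive ∧
          S.comp S = (ContinuousLinearMap.adjoint C).comp C ∧
          ∃ U : J →L[ℂ] H, K = S.comp U)) := by
  have hframe := isContKFrame_iff (μ := μ) K ψ
  refine ⟨hframe.trans (exists_congr fun C => and_congr_right fun _ => ?_),
    hframe.trans (exists_congr fun C => and_congr_right fun _ => ?_),
    hframe.trans ?_, hframe.trans (exists_congr fun C => and_congr_right fun _ => ?_)⟩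
  · rw [range_subset_range_iff_exists_lower_bound, adjoint_adjoint]
  · rw [← range_subset_range_iff_exists_comp, range_subset_range_iff_exists_lower_bound,
      adjoint_adjoint]
  · simp_rw [← apply_norm_sq_eq_inner_adjoint_right]
    exact ⟨fun ⟨C, hC, hK⟩ => ⟨hC.isBessel, C, hC, hK⟩, fun ⟨_, hK⟩ => hK⟩
  · exact (exists_sqrt_comp_iff C K).symm

/-- Characterizations of continuous `K`-frames, `K ∈ B(J, H)`, via the synthesis
operator `C_ψ*`, the frame operator `S_ψ = C_ψ* C_ψ`, and its square root. A bounded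
operator `C : H → L²(X, μ)` represents the analysis operator if `C f = (x ↦ ⟪ψ x, f⟫)`
a.e. for every `f`; then `C* ` is the synthesis operator. Statement (v) is expressed via
a positive operator `S` with `S ∘ S = S_ψ`, i.e. `S = S_ψ^{1/2}`. -/
theorem cont_K_frame_characterizations
    {J H : Type*}
    [NormedAddCommGroup J] [InnerProductSpace ℂ J] [CompleteSpace J]
    [NormedAddCommGroup H] [InnerProductSpace ℂ H] [CompleteSpace H]
    {X : Type*} [MeasurableSpace X] (μ : Measure X) [SigmaFinite μ]
    (K : J →L[ℂ] H) (ψ : X → H)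
    (hmeas : ∀ h : H, Measurable fun x => (⟪h, ψ x⟫ : ℂ)) :
    -- (i) ψ is a continuous K-frame
    ((∃ α > (0 : ℝ), ∃ β > (0 : ℝ), ∀ h : H,
        MemLp (fun x => (⟪h, ψ x⟫ : ℂ)) 2 μ ∧
        α * ‖ContinuousLinearMap.adjoint K h‖ ^ 2 ≤ ∫ x, ‖(⟪h, ψ x⟫ : ℂ)‖ ^ 2 ∂μ ∧
        ∫ x, ‖(⟪h, ψ x⟫ : ℂ)‖ ^ 2 ∂μ ≤ β * ‖h‖ ^ 2) ↔
      -- (ii) C_ψ* bounded and R(K) ⊆ R(C_ψ*)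
      (∃ C : H →L[ℂ] Lp ℂ 2 μ,
        (∀ f : H, (C f : X → ℂ) =ᵐ[μ] fun x => (⟪ψ x, f⟫ : ℂ)) ∧
        Set.range K ⊆ Set.range (ContinuousLinearMap.adjoint C))) ∧
    -- (i) ↔ (iii) : K = C_ψ* M
    ((∃ α > (0 : ℝ), ∃ β > (0 : ℝ), ∀ h : H,
        MemLp (fun x => (⟪h, ψ x⟫ : ℂ)) 2 μ ∧
        α * ‖ContinuousLinearMap.adjoint K h‖ ^ 2 ≤ ∫ x, ‖(⟪h, ψ x⟫ : ℂ)‖ ^ 2 ∂μ ∧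
        ∫ x, ‖(⟪h, ψ x⟫ : ℂ)‖ ^ 2 ∂μ ≤ β * ‖h‖ ^ 2) ↔
      (∃ C : H →L[ℂ] Lp ℂ 2 μ,
        (∀ f : H, (C f : X → ℂ) =ᵐ[μ] fun x => (⟪ψ x, f⟫ : ℂ)) ∧
        ∃ M : J →L[ℂ] Lp ℂ 2 μ, K = (ContinuousLinearMap.adjoint C).comp M)) ∧
    -- (i) ↔ (iv) : ψ Bessel and S_ψ ≥ α K K*
    ((∃ α > (0 : ℝ), ∃ β > (0 : ℝ), ∀ h : H,
        MemLp (fun x => (⟪h, ψ x⟫ : ℂ)) 2 μ ∧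
        α * ‖ContinuousLinearMap.adjoint K h‖ ^ 2 ≤ ∫ x, ‖(⟪h, ψ x⟫ : ℂ)‖ ^ 2 ∂μ ∧
        ∫ x, ‖(⟪h, ψ x⟫ : ℂ)‖ ^ 2 ∂μ ≤ β * ‖h‖ ^ 2) ↔
      ((∃ β > (0 : ℝ), ∀ h : H,
          MemLp (fun x => (⟪h, ψ x⟫ : ℂ)) 2 μ ∧
          ∫ x, ‖(⟪h, ψ x⟫ : ℂ)‖ ^ 2 ∂μ ≤ β * ‖h‖ ^ 2) ∧
        ∃ C : H →L[ℂ] Lp ℂ 2 μ,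
          (∀ f : H, (C f : X → ℂ) =ᵐ[μ] fun x => (⟪ψ x, f⟫ : ℂ)) ∧
          ∃ α > (0 : ℝ), ∀ f : H,
            α * ‖ContinuousLinearMap.adjoint K f‖ ^ 2 ≤
              RCLike.re (⟪f, ((ContinuousLinearMap.adjoint C).comp C) f⟫ : ℂ))) ∧
    -- (i) ↔ (v) : K = S_ψ^{1/2} U
    ((∃ α > (0 : ℝ), ∃ β > (0 : ℝ), ∀ h : H,
        MemLp (fun x => (⟪h, ψ x⟫ : ℂ)) 2 μ ∧
        α * ‖ContinuousLinearMap.adjoint K h‖ ^ 2 ≤ ∫ x, ‖(⟪h, ψ x⟫ : ℂ)‖ ^ 2 ∂μ ∧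
        ∫ x, ‖(⟪h, ψ x⟫ : ℂ)‖ ^ 2 ∂μ ≤ β * ‖h‖ ^ 2) ↔
      (∃ C : H →L[ℂ] Lp ℂ 2 μ,
        (∀ f : H, (C f : X → ℂ) =ᵐ[μ] fun x => (⟪ψ x, f⟫ : ℂ)) ∧
        ∃ S : H →L[ℂ] H, S.IsPositive ∧
          S.comp S = (ContinuousLinearMap.adjoint C).comp C ∧
          ∃ U : J →L[ℂ] H, K = S.comp U)) :=
  cont_K_frame_characterizations_general μ K ψ
end

section
/- Let K ∈ B(J,H), ψ a continuous K-frame for H, and φ : X → J a Bessel K-dual of ψ (so ⟨Kf,h⟩ = ∫_X ⟨f,φ_x⟩_J ⟨ψ_x,h⟩_H dμ(x) for all f ∈ J, h ∈ H). Then φ is a continuous atomic system for K*: it is Bessel and ⟨K*h,f⟩_J = ∫_X ⟨h,ψ_x⟩_H ⟨φ_x,f⟩_J dμ(x) for all h ∈ H, f ∈ J, with coefficient function x ↦ ⟨h,ψ_x⟩ of L²-norm bounded by √β ‖h‖. -/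
open MeasureTheory Filter Topology
open scoped ComplexInnerProductSpace

theorem Real.sqrt_le_sqrt_mul_of_le_mul_sq {a c b : ℝ} (hle : a ≤ c * b ^ 2) (hb : 0 ≤ b) :
    Real.sqrt a ≤ Real.sqrt c * b :=
  calc Real.sqrt a ≤ Real.sqrt (c * b ^ 2) := Real.sqrt_le_sqrt hle
    _ = Real.sqrt c * b := by rw [Real.sqrt_mul' c (sq_nonneg b), Real.sqrt_sq hb]

section AdjointReconstruction

open scoped InnerProductSpace

variable {𝕜 E F X : Type*} [RCLike 𝕜]
  [NormedAddCommGroup E] [InnerProductSpace 𝕜 E] [CompleteSpace E]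
  [NormedAddCommGroup F] [InnerProductSpace 𝕜 F] [CompleteSpace F]
  [MeasurableSpace X] {μ : Measure X}

theorem ContinuousLinearMap.inner_adjoint_eq_integral_of_inner_eq_integral
    {K : E →L[𝕜] F} {ψ : X → F} {φ : X → E} {f : E} {h : F}
    (hrec : ⟪h, K f⟫_𝕜 = ∫ x, ⟪φ x, f⟫_𝕜 * ⟪h, ψ x⟫_𝕜 ∂μ) :
    ⟪f, K.adjoint h⟫_𝕜 = ∫ x, ⟪ψ x, h⟫_𝕜 * ⟪f, φ x⟫_𝕜 ∂μ := by
  rw [← inner_conj_symm, ContinuousLinearMap.adjoint_inner_left, hrec, ← integral_conj]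
  congr 1 with x
  rw [map_mul, inner_conj_symm, inner_conj_symm, mul_comm]

end AdjointReconstruction

-- The paper's inner product `⟨a, b⟩` is `⟪b, a⟫` here.
theorem bessel_dual_atomic_system_for_adjoint_general
    {J H : Type*}
    [NormedAddCommGroup J] [InnerProductSpace ℂ J] [CompleteSpace J]
    [NormedAddCommGroup H] [InnerProductSpace ℂ H] [CompleteSpace H]
    {X : Type*} [MeasurableSpace X] (μ : Measure X)
    (K : J →L[ℂ] H) (ψ : X → H) (φ : X → J)
    (α β : ℝ)
    (hframe : ∀ h : H, MemLp (fun x => (⟪h, ψ x⟫ : ℂ)) 2 μ ∧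
      α * ‖ContinuousLinearMap.adjoint K h‖ ^ 2 ≤ ∫ x, ‖(⟪h, ψ x⟫ : ℂ)‖ ^ 2 ∂μ ∧
      ∫ x, ‖(⟪h, ψ x⟫ : ℂ)‖ ^ 2 ∂μ ≤ β * ‖h‖ ^ 2)
    (hdual : ∀ f : J, ∀ h : H,
      (⟪h, K f⟫ : ℂ) = ∫ x, (⟪φ x, f⟫ : ℂ) * (⟪h, ψ x⟫ : ℂ) ∂μ) :
    ∀ h : H,
      MemLp (fun x => (⟪h, ψ x⟫ : ℂ)) 2 μ ∧
      Real.sqrt (∫ x, ‖(⟪h, ψ x⟫ : ℂ)‖ ^ 2 ∂μ) ≤ Real.sqrt β * ‖h‖ ∧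
      ∀ f : J, (⟪f, ContinuousLinearMap.adjoint K h⟫ : ℂ) =
        ∫ x, (⟪ψ x, h⟫ : ℂ) * (⟪f, φ x⟫ : ℂ) ∂μ := by
  intro h
  obtain ⟨hmem, -, hupper⟩ := hframe h
  exact ⟨hmem, Real.sqrt_le_sqrt_mul_of_le_mul_sq hupper (norm_nonneg h),
    fun f => K.inner_adjoint_eq_integral_of_inner_eq_integral (hdual f h)⟩

/-- If `ψ` is a continuous `K`-frame for `H` and `φ : X → J` is a Bessel `K`-dual of `ψ`,
then `φ` is a continuous atomic system for `K*`: it is Bessel and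
`⟨K* h, f⟩ = ∫ ⟨h, ψ_x⟩ ⟨φ_x, f⟩ dμ` for all `h ∈ H`, `f ∈ J`, with coefficient function
`x ↦ ⟨h, ψ_x⟩` of `L²`-norm at most `√β ‖h‖`. (Paper inner products are `⟪·,·⟫` with
swapped arguments.) -/
theorem bessel_dual_atomic_system_for_adjoint
    {J H : Type*}
    [NormedAddCommGroup J] [InnerProductSpace ℂ J] [CompleteSpace J]
    [NormedAddCommGroup H] [InnerProductSpace ℂ H] [CompleteSpace H]
    {X : Type*} [MeasurableSpace X] (μ : Measure X)
    (K : J →L[ℂ] H) (ψ : X → H) (φ : X → J)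
    (hψmeas : ∀ h : H, Measurable fun x => (⟪h, ψ x⟫ : ℂ))
    (α β : ℝ) (hα : 0 < α) (hβ : 0 < β)
    (hframe : ∀ h : H, MemLp (fun x => (⟪h, ψ x⟫ : ℂ)) 2 μ ∧
      α * ‖ContinuousLinearMap.adjoint K h‖ ^ 2 ≤ ∫ x, ‖(⟪h, ψ x⟫ : ℂ)‖ ^ 2 ∂μ ∧
      ∫ x, ‖(⟪h, ψ x⟫ : ℂ)‖ ^ 2 ∂μ ≤ β * ‖h‖ ^ 2)
    (γ : ℝ) (hγ : 0 < γ)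
    (hφBessel : ∀ f : J, MemLp (fun x => (⟪f, φ x⟫ : ℂ)) 2 μ ∧
      ∫ x, ‖(⟪f, φ x⟫ : ℂ)‖ ^ 2 ∂μ ≤ γ * ‖f‖ ^ 2)
    (hdual : ∀ f : J, ∀ h : H,
      (⟪h, K f⟫ : ℂ) = ∫ x, (⟪φ x, f⟫ : ℂ) * (⟪h, ψ x⟫ : ℂ) ∂μ) :
    ∀ h : H,
      MemLp (fun x => (⟪h, ψ x⟫ : ℂ)) 2 μ ∧
      Real.sqrt (∫ x, ‖(⟪h, ψ x⟫ : ℂ)‖ ^ 2 ∂μ) ≤ Real.sqrt β * ‖h‖ ∧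
      ∀ f : J, (⟪f, ContinuousLinearMap.adjoint K h⟫ : ℂ) =
        ∫ x, (⟪ψ x, h⟫ : ℂ) * (⟪f, φ x⟫ : ℂ) ∂μ :=
  bessel_dual_atomic_system_for_adjoint_general μ K ψ φ α β hframe hdual
end
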